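/- arXiv:1605.01232 — 5 statements merged into one kernel-verified Lean document; each statement's English description precedes it below -/
import Mathlib

section
/- Under the standing setup, if r and r' both lie in the open interval (r_{n+1}, r_n) for some n, then |I(r) − I(r')| < 2. -/
open Complex Filter Set Topology

noncomputable section

/-- The open upper half-disc `Δ⁺ = {z : |z| < 1, Im z > 0}`. -/
def upperHalfDisk : Set ℂ := {z : ℂ | ‖z‖ < 1 ∧ 0 < z.im}

/-- `f` extends `C^∞`-smoothly to the closure of `Δ⁺`: it is smooth (as a map of real
2-dimensional domains) on an open neighbourhood of the closure. -/
def smoothUpToClosure (f : ℂ → ℂ) : Prop :=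
  ∃ U : Set ℂ, IsOpen U ∧ closure upperHalfDisk ⊆ U ∧ ContDiffOn ℝ (⊤ : ℕ∞) f U

/-- The zero set of the restriction of `f` to the interval `(-1,1)`. -/
def zerosOnInterval (f : ℂ → ℂ) : Set ℝ := {x : ℝ | x ∈ Set.Ioo (-1 : ℝ) 1 ∧ f x = 0}

/-- The zero set of `f` on `(-1,1)` is discrete with `0` as its only limit point. -/
def zeroSetDiscreteAccAtZero (f : ℂ → ℂ) : Prop :=
  AccPt (0 : ℝ) (Filter.principal (zerosOnInterval f)) ∧
    ∀ x : ℝ, x ≠ 0 → ¬ AccPt x (Filter.principal (zerosOnInterval f))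

/-- `f` vanishes to infinite order at `0` (approach within `Δ⁺`). -/
def vanishesInfOrderAtZero (f : ℂ → ℂ) : Prop :=
  ∀ N : ℕ, Tendsto (fun z => f z / (‖z‖ : ℂ) ^ N) (𝓝[upperHalfDisk] 0) (𝓝 0)

/-- The index (real winding number) of the curve `γ : [a,b] → ℂ∖{0}` with respect to `0`. -/
def indexAlong (γ : ℝ → ℂ) (a b : ℝ) : ℝ :=
  (1 / (2 * Real.pi * Complex.I) * ∫ t in a..b, deriv γ t / γ t).re

/-- The upper semicircle `γ_r(θ) = r e^{iθ}`. -/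
def semiCircle (r θ : ℝ) : ℂ := r * Complex.exp (θ * Complex.I)

/-- `I(r) := Ind(f ∘ γ_r)`, the index of `f` along the upper semicircle of radius `r`. -/
def semiInd (f : ℂ → ℂ) (r : ℝ) : ℝ := indexAlong (fun θ => f (semiCircle r θ)) 0 Real.pi

lemma isOpen_upperHalfDisk : IsOpen upperHalfDisk := by
  have : upperHalfDisk = {z : ℂ | ‖z‖ < 1} ∩ {z : ℂ | 0 < z.im} := rfl
  rw [this]
  exact (isOpen_lt continuous_norm continuous_const).inter
    (isOpen_lt continuous_const Complex.continuous_im)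

lemma mem_closure_upperHalfDisk {z : ℂ} (h1 : ‖z‖ < 1) (h2 : 0 ≤ z.im) :
    z ∈ closure upperHalfDisk := by
  refine Metric.mem_closure_iff.mpr (fun ε hε => ?_)
  set δ := min (ε / 2) ((1 - ‖z‖) / 2) with hδ
  have hδpos : 0 < δ := lt_min (by linarith) (by linarith)
  refine ⟨z + δ * I, ⟨?_, ?_⟩, ?_⟩
  · have h3 : ‖(δ : ℂ) * I‖ = δ := by
      simp [abs_of_pos hδpos]
    calc ‖z + δ * I‖ ≤ ‖z‖ + ‖(δ:ℂ) * I‖ :=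
          norm_add_le _ _
      _ = ‖z‖ + δ := by rw [h3]
      _ ≤ ‖z‖ + (1 - ‖z‖) / 2 := by
          have := min_le_right (ε / 2) ((1 - ‖z‖) / 2); linarith
      _ < 1 := by linarith
  · simp only [Complex.add_im, Complex.mul_im, Complex.ofReal_re, Complex.I_im,
      Complex.ofReal_im, Complex.I_re, mul_zero, mul_one, zero_mul]
    linarith
  · have h3 : dist z (z + δ * I) = δ := by
      rw [Complex.dist_eq]
      simp [abs_of_pos hδpos]
    rw [h3]
    have := min_le_left (ε / 2) ((1 - ‖z‖) / 2); linarith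

lemma hasDerivAt_of_mem_closure {f : ℂ → ℂ} {U : Set ℂ} (hUo : IsOpen U)
    (hUsub : closure upperHalfDisk ⊆ U) (hsm : ContDiffOn ℝ (⊤ : ℕ∞) f U)
    (hhol : DifferentiableOn ℂ f upperHalfDisk) {z : ℂ} (hz : z ∈ closure upperHalfDisk) :
    HasDerivAt f (fderiv ℝ f z 1) z := by
  have hzU : z ∈ U := hUsub hz
  have hcontfd : ContinuousOn (fderiv ℝ f) U := hsm.continuousOn_fderiv_of_isOpen hUo (by simp)
  have hsubU : upperHalfDisk ⊆ U := subset_closure.trans hUsub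
  -- Cauchy-Riemann on the open half disk
  have hCR : ∀ w ∈ upperHalfDisk, fderiv ℝ f w I - I * fderiv ℝ f w 1 = 0 := by
    intro w hw
    have h1 : DifferentiableAt ℂ f w :=
      hhol.differentiableAt (isOpen_upperHalfDisk.mem_nhds hw)
    have h2 : fderiv ℝ f w = (fderiv ℂ f w).restrictScalars ℝ :=
      (h1.hasFDerivAt.restrictScalars ℝ).fderiv
    rw [h2]
    simp only [ContinuousLinearMap.coe_restrictScalars']
    have h3 := (fderiv ℂ f w).map_smul I (1 : ℂ)
    simp only [smul_eq_mul, mul_one] at h3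
    rw [h3]; ring
  -- CR at z by continuity
  have hCRz : fderiv ℝ f z I - I * fderiv ℝ f z 1 = 0 := by
    set Φ : ℂ → ℂ := fun w => fderiv ℝ f w I - I * fderiv ℝ f w 1 with hΦ
    have hΦcont : ContinuousOn Φ U := by
      apply ContinuousOn.sub
      · exact (ContinuousLinearMap.apply ℝ ℂ (I : ℂ)).continuous.comp_continuousOn hcontfd
      · exact continuousOn_const.mul
          ((ContinuousLinearMap.apply ℝ ℂ (1 : ℂ)).continuous.comp_continuousOn hcontfd)
    have hnb : (𝓝[upperHalfDisk] z).NeBot := mem_closure_iff_nhdsWithin_neBot.mp hz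
    have ht1 : Tendsto Φ (𝓝[upperHalfDisk] z) (𝓝 (Φ z)) :=
      ((hΦcont z hzU).mono hsubU).tendsto
    have ht2 : Tendsto Φ (𝓝[upperHalfDisk] z) (𝓝 0) :=
      tendsto_const_nhds.congr' (by
        filter_upwards [self_mem_nhdsWithin] with w hw using (hCR w hw).symm)
    exact tendsto_nhds_unique ht1 ht2
  -- conclude
  have hdiff : DifferentiableAt ℝ f z :=
    (hsm.differentiableOn (by simp)).differentiableAt (hUo.mem_nhds hzU)
  have hfd : HasFDerivAt f (fderiv ℝ f z) z := hdiff.hasFDerivAt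
  set L := fderiv ℝ f z with hL
  set M : ℂ →L[ℂ] ℂ := (L 1) • (1 : ℂ →L[ℂ] ℂ) with hM
  have hLM : M.restrictScalars ℝ = L := by
    apply ContinuousLinearMap.ext
    intro w
    have hI : L I = I * L 1 := sub_eq_zero.mp hCRz
    rw [ContinuousLinearMap.coe_restrictScalars']
    show M w = L w
    have h1 : L w = ↑w.re * L 1 + ↑w.im * L I := by
      have hw : w = w.re • (1 : ℂ) + w.im • I := by
        simp [Complex.real_smul, Complex.re_add_im]
      conv_lhs => rw [hw]
      rw [map_add, map_smul, map_smul]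
      simp [Complex.real_smul]
    have h2 : M w = L 1 * w := by
      simp [hM, smul_eq_mul]
    rw [h1, h2, hI]
    have h3 := Complex.re_add_im w
    linear_combination (L 1) * h3.symm
  have hfd3 : HasFDerivAt f M z := hasFDerivAt_of_restrictScalars ℝ hfd hLM
  have h4 := hfd3.hasDerivAt
  simpa [hM] using h4

/-- Lemma 2.1(ii): between consecutive zero radii, `I` varies by less than `2`. -/
theorem semiInd_variation_lt_two (f : ℂ → ℂ)
    (hf_hol : DifferentiableOn ℂ f upperHalfDisk)
    (hf_smooth : smoothUpToClosure f)
    (hf_bd : ∀ x ∈ Set.Ioo (-1 : ℝ) 1, ¬((f x).re = 0 ∧ 0 < (f x).im))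
    (hf_zeros : zeroSetDiscreteAccAtZero f)
    (hf_finord : ∀ b ∈ Set.Ioo (-1 : ℝ) 1, b ≠ 0 → f b = 0 →
      ∃ k : ℕ, iteratedDeriv k (fun x : ℝ => f x) b ≠ 0)
    (r : ℕ → ℝ) (hr_anti : StrictAnti r) (hr_mem : ∀ n, r n ∈ Set.Ioo (0 : ℝ) 1)
    (hr_lim : Tendsto r atTop (𝓝 0))
    (hr_zeros : ∀ z ∈ closure upperHalfDisk, z ≠ 0 → f z = 0 → ∃ n, ‖z‖ = r n) :
    ∀ n : ℕ, ∀ ρ ∈ Set.Ioo (r (n + 1)) (r n), ∀ ρ' ∈ Set.Ioo (r (n + 1)) (r n),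
      |semiInd f ρ - semiInd f ρ'| < 2 := by
  intro n ρ hρ ρ' hρ'
  obtain ⟨U, hUo, hUsub, hfsm⟩ := hf_smooth
  set F' : ℂ → ℂ := fun z => fderiv ℝ f z 1 with hF'
  have hDeriv : ∀ z ∈ closure upperHalfDisk, HasDerivAt f (F' z) z :=
    fun z hz => hasDerivAt_of_mem_closure hUo hUsub hfsm hf_hol hz
  have hrn1 : 0 < r (n + 1) := (hr_mem (n + 1)).1
  have hrn : r n < 1 := (hr_mem n).2
  have hρ0 : 0 < ρ := hrn1.trans hρ.1
  have hρ'0 : 0 < ρ' := hrn1.trans hρ'.1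
  -- nonvanishing of f on the closed half-annulus
  have hne : ∀ x : ℂ, x ∈ closure upperHalfDisk → r (n + 1) < ‖x‖ →
      ‖x‖ < r n → f x ≠ 0 := by
    intro x hx h1 h2 hfx
    have hx0 : x ≠ 0 := by
      intro h; rw [h] at h1; simp only [norm_zero] at h1; linarith
    obtain ⟨m, hm⟩ := hr_zeros x hx hx0 hfx
    rcases le_or_gt m n with h | h
    · have := hr_anti.antitone h; rw [hm] at h2; linarith
    · have := hr_anti.antitone (Nat.succ_le_of_lt h); rw [hm] at h1; linarith
  set a := Real.log ρ' with ha
  set b := Real.log ρ with hb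
  have hea : Real.exp a = ρ' := Real.exp_log hρ'0
  have heb : Real.exp b = ρ := Real.exp_log hρ0
  have hkey : ∀ t ∈ uIcc a b, r (n + 1) < Real.exp t ∧ Real.exp t < r n := by
    intro t ht
    rcases le_total a b with hab | hab
    · rw [uIcc_of_le hab] at ht
      constructor
      · calc r (n + 1) < ρ' := hρ'.1
          _ = Real.exp a := hea.symm
          _ ≤ Real.exp t := Real.exp_le_exp.mpr ht.1
      · calc Real.exp t ≤ Real.exp b := Real.exp_le_exp.mpr ht.2
          _ = ρ := heb
          _ < r n := hρ.2
    · rw [uIcc_of_ge hab] at ht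
      constructor
      · calc r (n + 1) < ρ := hρ.1
          _ = Real.exp b := heb.symm
          _ ≤ Real.exp t := Real.exp_le_exp.mpr ht.1
      · calc Real.exp t ≤ Real.exp a := Real.exp_le_exp.mpr ht.2
          _ = ρ' := hea
          _ < r n := hρ'.2
  set R : Set ℂ := uIcc a b ×ℂ uIcc (0 : ℝ) Real.pi with hR
  have hmemR : ∀ w ∈ R, Complex.exp w ∈ closure upperHalfDisk ∧
      r (n + 1) < ‖Complex.exp w‖ ∧ ‖Complex.exp w‖ < r n := by
    intro w hw
    rw [hR, mem_reProdIm] at hw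
    have h1 : ‖Complex.exp w‖ = Real.exp w.re := Complex.norm_exp w
    have h2 := hkey w.re hw.1
    have h3 : 0 ≤ (Complex.exp w).im := by
      rw [Complex.exp_im]
      have hw2 := hw.2
      rw [uIcc_of_le Real.pi_pos.le] at hw2
      exact mul_nonneg (Real.exp_pos _).le (Real.sin_nonneg_of_nonneg_of_le_pi hw2.1 hw2.2)
    refine ⟨mem_closure_upperHalfDisk (by rw [h1]; linarith [h2.2]) h3,
      by rw [h1]; exact h2.1, by rw [h1]; exact h2.2⟩
  set g : ℂ → ℂ := fun w => Complex.exp w * F' (Complex.exp w) / f (Complex.exp w) with hg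
  have hmapsU : MapsTo Complex.exp R U := fun w hw => hUsub (hmemR w hw).1
  have hexpcont : ContinuousOn Complex.exp R := Complex.continuous_exp.continuousOn
  have hF'cont : ContinuousOn F' U :=
    (ContinuousLinearMap.apply ℝ ℂ (1 : ℂ)).continuous.comp_continuousOn
      (hfsm.continuousOn_fderiv_of_isOpen hUo (by simp))
  have hfcont : ContinuousOn f U := hfsm.continuousOn
  have hgcont : ContinuousOn g R := by
    apply ContinuousOn.div
    · exact hexpcont.mul (hF'cont.comp hexpcont hmapsU)
    · exact hfcont.comp hexpcont hmapsU
    · intro w hw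
      obtain ⟨hc, h1, h2⟩ := hmemR w hw
      exact hne _ hc h1 h2
  -- differentiability of g on the open rectangle
  have hg_diff : ∀ w ∈ Ioo (min a b) (max a b) ×ℂ
      Ioo (min (0:ℝ) Real.pi) (max (0:ℝ) Real.pi) \ (∅ : Set ℂ), DifferentiableAt ℂ g w := by
    intro w hw
    rw [diff_empty, mem_reProdIm, min_eq_left Real.pi_pos.le, max_eq_right Real.pi_pos.le] at hw
    have hwre : w.re ∈ uIcc a b := by
      rw [uIcc]; exact Ioo_subset_Icc_self hw.1
    have h2 := hkey w.re hwre
    have hmem : Complex.exp w ∈ upperHalfDisk := by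
      constructor
      · rw [Complex.norm_exp]; linarith [h2.2]
      · rw [Complex.exp_im]
        exact mul_pos (Real.exp_pos _) (Real.sin_pos_of_pos_of_lt_pi hw.2.1 hw.2.2)
    have hfne : f (Complex.exp w) ≠ 0 := by
      apply hne _ (subset_closure hmem)
      · rw [Complex.norm_exp]; exact h2.1
      · rw [Complex.norm_exp]; exact h2.2
    have hopen : IsOpen (Complex.exp ⁻¹' upperHalfDisk) :=
      isOpen_upperHalfDisk.preimage Complex.continuous_exp
    have heq : g =ᶠ[𝓝 w]
        fun v => Complex.exp v * deriv f (Complex.exp v) / f (Complex.exp v) := by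
      filter_upwards [hopen.mem_nhds hmem] with v hv
      have hdv : DifferentiableAt ℂ f (Complex.exp v) :=
        hf_hol.differentiableAt (isOpen_upperHalfDisk.mem_nhds hv)
      have hFd : F' (Complex.exp v) = deriv f (Complex.exp v) := by
        rw [hF']
        have h3 := DifferentiableAt.fderiv_restrictScalars ℝ hdv
        show (fderiv ℝ f (Complex.exp v)) 1 = deriv f (Complex.exp v)
        rw [h3]
        rfl
      rw [hg]
      simp only [hFd]
    rw [Filter.EventuallyEq.differentiableAt_iff heq]
    have han : AnalyticOnNhd ℂ f upperHalfDisk := hf_hol.analyticOnNhd isOpen_upperHalfDisk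
    have hder_diff : DifferentiableAt ℂ (deriv f) (Complex.exp w) :=
      ((han.deriv (Complex.exp w) hmem).differentiableAt)
    have hfd : DifferentiableAt ℂ f (Complex.exp w) :=
      hf_hol.differentiableAt (isOpen_upperHalfDisk.mem_nhds hmem)
    have hexp : DifferentiableAt ℂ Complex.exp w := (Complex.hasDerivAt_exp w).differentiableAt
    exact ((hexp.mul (hder_diff.comp w hexp)).div ((hfd.comp w hexp)) hfne)
  -- Cauchy's theorem on the rectangle
  set zc : ℂ := (a : ℂ) with hzc
  set wc : ℂ := (b : ℂ) + Real.pi * I with hwc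
  have hre1 : zc.re = a := by simp [hzc]
  have him1 : zc.im = 0 := by simp [hzc]
  have hre2 : wc.re = b := by simp [hwc]
  have him2 : wc.im = Real.pi := by simp [hwc]
  have hHc : ContinuousOn g (uIcc zc.re wc.re ×ℂ uIcc zc.im wc.im) := by
    rw [hre1, him1, hre2, him2]; exact hgcont
  have hHd : ∀ x ∈ Ioo (min zc.re wc.re) (max zc.re wc.re) ×ℂ
      Ioo (min zc.im wc.im) (max zc.im wc.im) \ (∅ : Set ℂ), DifferentiableAt ℂ g x := by
    rw [hre1, him1, hre2, him2]; exact hg_diff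
  have hC := Complex.integral_boundary_rect_eq_zero_of_differentiable_on_off_countable
    g zc wc ∅ countable_empty hHc hHd
  rw [hre1, him1, hre2, him2] at hC
  simp only [Complex.ofReal_zero, zero_mul, add_zero, smul_eq_mul] at hC
  -- slit plane facts
  have hslit : ∀ x : ℝ, -1 < x → x < 1 → f ↑x ≠ 0 → I * f ↑x ∈ Complex.slitPlane := by
    intro x h1 h2 hfx
    have hbd := hf_bd x ⟨h1, h2⟩
    rw [Complex.mem_slitPlane_iff]
    simp only [Complex.mul_re, Complex.mul_im, Complex.I_re, Complex.I_im, zero_mul, one_mul,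
      zero_sub, zero_add]
    by_cases hre : (f ↑x).re = 0
    · left
      have him : (f ↑x).im ≠ 0 := by
        intro h; exact hfx (Complex.ext hre h)
      have : ¬ (0 < (f ↑x).im) := fun h => hbd ⟨hre, h⟩
      push_neg at this
      have : (f ↑x).im < 0 := lt_of_le_of_ne this him
      linarith
    · right; exact hre
  -- generic logarithmic derivative along exp
  have hLc : ∀ w : ℂ, Complex.exp w ∈ closure upperHalfDisk →
      I * f (Complex.exp w) ∈ Complex.slitPlane → f (Complex.exp w) ≠ 0 →
      HasDerivAt (fun v => Complex.log (I * f (Complex.exp v))) (g w) w := by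
    intro w h1 h2 h3
    have he : HasDerivAt Complex.exp (Complex.exp w) w := Complex.hasDerivAt_exp w
    have hf1 : HasDerivAt f (F' (Complex.exp w)) (Complex.exp w) := hDeriv _ h1
    have hcomp : HasDerivAt (fun v => f (Complex.exp v))
        (F' (Complex.exp w) * Complex.exp w) w := hf1.comp w he
    have hIc : HasDerivAt (fun v => I * f (Complex.exp v))
        (I * (F' (Complex.exp w) * Complex.exp w)) w := hcomp.const_mul I
    have := hIc.clog h2
    convert this using 1
    rw [hg]
    field_simp [Complex.I_ne_zero, h3]
  -- facts about real points
  have hfacts : ∀ x : ℝ, r (n + 1) < |x| → |x| < r n →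
      f ↑x ≠ 0 ∧ I * f ↑x ∈ Complex.slitPlane ∧ ((x : ℂ) ∈ closure upperHalfDisk) := by
    intro x h1 h2
    have hcl : ((x : ℂ)) ∈ closure upperHalfDisk :=
      mem_closure_upperHalfDisk (by rw [Complex.norm_real, Real.norm_eq_abs]; linarith) (by simp)
    have hfx : f ↑x ≠ 0 := hne _ hcl (by rwa [Complex.norm_real, Real.norm_eq_abs]) (by rwa [Complex.norm_real, Real.norm_eq_abs])
    have hx1 : -1 < x ∧ x < 1 := abs_lt.mp (h2.trans hrn)
    exact ⟨hfx, hslit x hx1.1 hx1.2 hfx, hcl⟩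
  -- bottom horizontal integral
  have hB : (∫ x in a..b, g ↑x) = Complex.log (I * f ↑ρ) - Complex.log (I * f ↑ρ') := by
    have hFTC : ∀ t ∈ uIcc a b,
        HasDerivAt (fun s : ℝ => Complex.log (I * f (Complex.exp (↑s : ℂ)))) (g ↑t) t := by
      intro t ht
      have h2 := hkey t ht
      have he0 := Real.exp_pos t
      obtain ⟨hfx, hsl, hcl⟩ := hfacts (Real.exp t)
        (by rw [abs_of_pos he0]; exact h2.1) (by rw [abs_of_pos he0]; exact h2.2)
      rw [Complex.ofReal_exp] at hfx hsl hcl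
      exact (hLc ↑t hcl hsl hfx).comp_ofReal
    have hint : IntervalIntegrable (fun t : ℝ => g ↑t) MeasureTheory.volume a b := by
      apply ContinuousOn.intervalIntegrable
      apply hgcont.comp Complex.continuous_ofReal.continuousOn
      intro t ht
      rw [hR, mem_reProdIm]
      refine ⟨by simpa using ht, ?_⟩
      simp only [Complex.ofReal_im]
      rw [uIcc_of_le Real.pi_pos.le]
      exact left_mem_Icc.mpr Real.pi_pos.le
    rw [intervalIntegral.integral_eq_sub_of_hasDerivAt hFTC hint]
    simp only [← Complex.ofReal_exp, hea, heb]
  -- top horizontal integral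
  have hexp2 : ∀ t : ℝ, Complex.exp (↑t + ↑Real.pi * I) = -↑(Real.exp t) := by
    intro t
    rw [Complex.exp_add, Complex.exp_pi_mul_I, ← Complex.ofReal_exp]
    ring
  have hT : (∫ x in a..b, g (↑x + ↑Real.pi * I)) =
      Complex.log (I * f (-↑ρ)) - Complex.log (I * f (-↑ρ')) := by
    have hFTC : ∀ t ∈ uIcc a b, HasDerivAt
        (fun s : ℝ => Complex.log (I * f (Complex.exp (↑s + ↑Real.pi * I))))
        (g (↑t + ↑Real.pi * I)) t := by
      intro t ht
      have h2 := hkey t ht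
      have he0 := Real.exp_pos t
      obtain ⟨hfx, hsl, hcl⟩ := hfacts (-Real.exp t)
        (by rw [abs_neg, abs_of_pos he0]; exact h2.1)
        (by rw [abs_neg, abs_of_pos he0]; exact h2.2)
      rw [show ((-Real.exp t : ℝ) : ℂ) = -↑(Real.exp t) from by push_cast; ring,
        ← hexp2 t] at hfx hsl hcl
      have houter := hLc _ hcl hsl hfx
      have hpath : HasDerivAt (fun s : ℝ => ((s : ℂ) + ↑Real.pi * I)) 1 t := by
        simpa using ((hasDerivAt_id ((t : ℝ) : ℂ)).add_const (↑Real.pi * I)).comp_ofReal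
      have hres := HasDerivAt.scomp t houter hpath
      simpa only [Function.comp_def, one_smul] using hres
    have hint : IntervalIntegrable (fun t : ℝ => g (↑t + ↑Real.pi * I))
        MeasureTheory.volume a b := by
      apply ContinuousOn.intervalIntegrable
      apply hgcont.comp (Continuous.continuousOn
        (Complex.continuous_ofReal.add continuous_const))
      intro t ht
      rw [hR, mem_reProdIm]
      constructor
      · simpa using ht
      · simp only [Pi.add_apply, Complex.add_im, Complex.ofReal_im, Complex.mul_im, Complex.ofReal_re,
          Complex.I_im, Complex.I_re, mul_zero, mul_one, zero_add, zero_mul, add_zero]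
        rw [uIcc_of_le Real.pi_pos.le]
        exact right_mem_Icc.mpr Real.pi_pos.le
    rw [intervalIntegral.integral_eq_sub_of_hasDerivAt hFTC hint]
    simp only [hexp2, hea, heb]
  -- evaluation of semiInd via the vertical integrals
  have hπ2 : (0:ℝ) < 2 * Real.pi := by positivity
  have hsemi : ∀ σ c : ℝ, 0 < σ → Real.exp c = σ → r (n + 1) < σ → σ < r n →
      semiInd f σ = (∫ θ in (0:ℝ)..Real.pi, g (↑c + ↑θ * I)).re / (2 * Real.pi) := by
    intro σ c hσ hc h1 h2
    have hγ : ∀ θ : ℝ, semiCircle σ θ = Complex.exp (↑c + ↑θ * I) := by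
      intro θ
      rw [semiCircle, Complex.exp_add, ← Complex.ofReal_exp, hc]
    have habs : ∀ θ : ℝ, ‖semiCircle σ θ‖ = σ := by
      intro θ
      rw [semiCircle, norm_mul, Complex.norm_real, Complex.norm_exp]
      simp [abs_of_pos hσ]
    have hEq : EqOn (fun θ => deriv (fun θ => f (semiCircle σ θ)) θ / f (semiCircle σ θ))
        (fun θ => I * g (↑c + ↑θ * I)) (uIcc (0:ℝ) Real.pi) := by
      intro θ hθ
      rw [uIcc_of_le Real.pi_pos.le] at hθ
      have hcl : semiCircle σ θ ∈ closure upperHalfDisk := by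
        apply mem_closure_upperHalfDisk
        · rw [habs]; linarith
        · have him : (semiCircle σ θ).im = σ * Real.sin θ := by
            rw [semiCircle]
            simp [Complex.mul_im, Complex.exp_ofReal_mul_I_im, Complex.exp_ofReal_mul_I_re]
          rw [him]
          exact mul_nonneg hσ.le (Real.sin_nonneg_of_nonneg_of_le_pi hθ.1 hθ.2)
      have hfne : f (semiCircle σ θ) ≠ 0 := hne _ hcl (by rw [habs]; exact h1)
        (by rw [habs]; exact h2)
      have h0 : HasDerivAt (fun w : ℂ => (σ:ℂ) * Complex.exp (w * I))
          ((σ:ℂ) * (Complex.exp ((θ:ℂ) * I) * I)) ↑θ := by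
        have h00 := ((Complex.hasDerivAt_exp ((θ:ℂ) * I)).comp ((θ:ℂ))
          ((hasDerivAt_id ((θ:ℂ))).mul_const I)).const_mul ((σ:ℂ))
        simp only [Function.comp_def, id] at h00
        exact h00.congr_deriv (by ring)
      have hin : HasDerivAt (fun θ : ℝ => semiCircle σ θ) (semiCircle σ θ * I) θ := by
        have h1' := h0.comp_ofReal
        have heq2 : (σ:ℂ) * (Complex.exp ((θ:ℂ) * I) * I) = semiCircle σ θ * I := by
          rw [semiCircle]; ring
        rw [heq2] at h1'
        exact h1'
      have hcomp : HasDerivAt (fun θ : ℝ => f (semiCircle σ θ))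
          ((semiCircle σ θ * I) • F' (semiCircle σ θ)) θ :=
        HasDerivAt.scomp θ (hDeriv _ hcl) hin
      show deriv (fun θ => f (semiCircle σ θ)) θ / f (semiCircle σ θ) = I * g (↑c + ↑θ * I)
      rw [hcomp.deriv]
      simp only [hg, smul_eq_mul]
      rw [← hγ θ]
      field_simp
    unfold semiInd indexAlong
    rw [intervalIntegral.integral_congr hEq]
    rw [intervalIntegral.integral_const_mul]
    have hI2 : 1 / (2 * (Real.pi:ℂ) * I) * (I * ∫ θ in (0:ℝ)..Real.pi, g (↑c + ↑θ * I))
        = (((2 * Real.pi)⁻¹ : ℝ) : ℂ) * ∫ θ in (0:ℝ)..Real.pi, g (↑c + ↑θ * I) := by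
      have hπ : (Real.pi : ℂ) ≠ 0 := Complex.ofReal_ne_zero.mpr Real.pi_ne_zero
      push_cast
      field_simp
    rw [hI2, Complex.re_ofReal_mul, inv_mul_eq_div]
  -- final assembly
  rw [hB, hT] at hC
  have h7 : I * ((∫ y in (0:ℝ)..Real.pi, g (↑b + ↑y * I)) - (∫ y in (0:ℝ)..Real.pi, g (↑a + ↑y * I)))
      = (Complex.log (I * f (-↑ρ)) - Complex.log (I * f (-↑ρ')))
        - (Complex.log (I * f ↑ρ) - Complex.log (I * f ↑ρ')) := by
    linear_combination hC
  have h8 : (∫ y in (0:ℝ)..Real.pi, g (↑b + ↑y * I)).re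
      - (∫ y in (0:ℝ)..Real.pi, g (↑a + ↑y * I)).re
      = ((Complex.log (I * f (-↑ρ))).im - (Complex.log (I * f (-↑ρ'))).im)
        - ((Complex.log (I * f ↑ρ)).im - (Complex.log (I * f ↑ρ')).im) := by
    have h9 := congrArg Complex.im h7
    simp only [Complex.mul_im, Complex.I_re, Complex.I_im, Complex.sub_im, Complex.sub_re,
      zero_mul, one_mul, zero_add] at h9
    linarith [h9]
  have e1 := hsemi ρ b hρ0 heb hρ.1 hρ.2
  have e2 := hsemi ρ' a hρ'0 hea hρ'.1 hρ'.2
  have harg : ∀ w : ℂ, w ∈ Complex.slitPlane → |Complex.arg w| < Real.pi := fun w hw =>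
    abs_lt.mpr ⟨Complex.neg_pi_lt_arg w,
      lt_of_le_of_ne (Complex.arg_le_pi w) (Complex.slitPlane_arg_ne_pi hw)⟩
  have hsl1 : I * f ↑ρ ∈ Complex.slitPlane :=
    (hfacts ρ (by rw [abs_of_pos hρ0]; exact hρ.1) (by rw [abs_of_pos hρ0]; exact hρ.2)).2.1
  have hsl2 : I * f ↑ρ' ∈ Complex.slitPlane :=
    (hfacts ρ' (by rw [abs_of_pos hρ'0]; exact hρ'.1) (by rw [abs_of_pos hρ'0]; exact hρ'.2)).2.1
  have hsl3 : I * f (-↑ρ) ∈ Complex.slitPlane := by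
    have := (hfacts (-ρ) (by rw [abs_neg, abs_of_pos hρ0]; exact hρ.1)
      (by rw [abs_neg, abs_of_pos hρ0]; exact hρ.2)).2.1
    rwa [Complex.ofReal_neg] at this
  have hsl4 : I * f (-↑ρ') ∈ Complex.slitPlane := by
    have := (hfacts (-ρ') (by rw [abs_neg, abs_of_pos hρ'0]; exact hρ'.1)
      (by rw [abs_neg, abs_of_pos hρ'0]; exact hρ'.2)).2.1
    rwa [Complex.ofReal_neg] at this
  have ha1 : |(Complex.log (I * f ↑ρ)).im| < Real.pi := by
    rw [Complex.log_im]; exact harg _ hsl1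
  have ha2 : |(Complex.log (I * f ↑ρ')).im| < Real.pi := by
    rw [Complex.log_im]; exact harg _ hsl2
  have ha3 : |(Complex.log (I * f (-↑ρ))).im| < Real.pi := by
    rw [Complex.log_im]; exact harg _ hsl3
  have ha4 : |(Complex.log (I * f (-↑ρ'))).im| < Real.pi := by
    rw [Complex.log_im]; exact harg _ hsl4
  rw [e1, e2, div_sub_div_same, h8]
  rw [abs_div, abs_of_pos hπ2, div_lt_iff₀ hπ2]
  have tri : ∀ x y : ℝ, |x - y| ≤ |x| + |y| := fun x y => by
    rw [sub_eq_add_neg]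
    exact (abs_add_le x (-y)).trans_eq (by rw [abs_neg])
  have t1 := tri ((Complex.log (I * f (-↑ρ))).im - (Complex.log (I * f (-↑ρ'))).im)
    ((Complex.log (I * f ↑ρ)).im - (Complex.log (I * f ↑ρ')).im)
  have t2 := tri (Complex.log (I * f (-↑ρ))).im (Complex.log (I * f (-↑ρ'))).im
  have t3 := tri (Complex.log (I * f ↑ρ)).im (Complex.log (I * f ↑ρ')).im
  linarith
end
end

section
/- If γ : [a,b] → ℂ is a piecewise C¹ curve whose image is contained in {z ∈ ℂ : Re z ≠ 0}, then Ind(γ) < 1/2. -/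
open Complex Filter Set Topology

noncomputable section

/-- `γ` is a piecewise `C¹` curve on `[a,b]`: it is continuous on `[a,b]` and there is a
finite partition `a = t₀ < t₁ < ⋯ < tₙ = b` on each closed subinterval of which `γ` is `C¹`. -/
def PiecewiseC1On (γ : ℝ → ℂ) (a b : ℝ) : Prop :=
  ContinuousOn γ (Set.Icc a b) ∧
    ∃ (n : ℕ) (t : Fin (n + 1) → ℝ),
      t 0 = a ∧ t (Fin.last n) = b ∧ StrictMono t ∧
        ∀ i : Fin n, ContDiffOn ℝ 1 γ (Set.Icc (t i.castSucc) (t i.succ))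

/-!
On `{Re z ≠ 0}` the function `z ↦ arctan (Im z / Re z)` is a continuous branch of `arg z`
modulo `π`, so along each `C¹` piece of `γ` it is a primitive of `Im (γ'/γ)`. The pieces
telescope, hence `2π · Ind(γ)` is a difference of two values of `arctan`, which lies
in `(-π, π)`.
-/

open MeasureTheory intervalIntegral

section Partition

variable {E : Type*} [NormedAddCommGroup E] {f : ℝ → E} {μ : Measure ℝ} {n : ℕ}
  {t : Fin (n + 1) → ℝ}

theorem IntervalIntegrable.of_pieces
    (hf : ∀ i : Fin n, IntervalIntegrable f μ (t i.castSucc) (t i.succ)) :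
    IntervalIntegrable f μ (t 0) (t (Fin.last n)) := by
  induction n with
  | zero => exact IntervalIntegrable.refl
  | succ n ih =>
    exact (ih (t := fun i => t i.castSucc) fun i => hf i.castSucc).trans (hf (Fin.last n))

theorem intervalIntegral.integral_eq_sub_of_pieces [NormedSpace ℝ E] {F : ℝ → E}
    (hf : ∀ i : Fin n, IntervalIntegrable f μ (t i.castSucc) (t i.succ))
    (hF : ∀ i : Fin n,
      ∫ x in t i.castSucc..t i.succ, f x ∂μ = F (t i.succ) - F (t i.castSucc)) :
    ∫ x in t 0..t (Fin.last n), f x ∂μ = F (t (Fin.last n)) - F (t 0) := by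
  induction n with
  | zero => simp
  | succ n ih =>
    have hinit := IntervalIntegrable.of_pieces (t := fun i => t i.castSucc)
      fun i => hf i.castSucc
    have hinitEq := ih (t := fun i => t i.castSucc) (fun i => hf i.castSucc)
      fun i => hF i.castSucc
    simp only [Fin.castSucc_zero] at hinit hinitEq
    rw [← Fin.succ_last, ← integral_add_adjacent_intervals hinit (hf (Fin.last n)), hinitEq,
      hF (Fin.last n)]
    abel

end Partition

section ArctanSlope

def arctanSlope (z : ℂ) : ℝ := Real.arctan (z.im / z.re)

theorem arctanSlope_sub_arctanSlope_lt_pi (z w : ℂ) :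
    arctanSlope z - arctanSlope w < Real.pi := by
  have := Real.arctan_lt_pi_div_two (z.im / z.re)
  have := Real.neg_pi_div_two_lt_arctan (w.im / w.re)
  rw [arctanSlope, arctanSlope]
  linarith

variable {γ : ℝ → ℂ} {c d : ℝ}

theorem HasDerivAt.arctanSlope {γ' : ℂ} {x : ℝ} (hγ : HasDerivAt γ γ' x)
    (hx : (γ x).re ≠ 0) :
    HasDerivAt (fun s => arctanSlope (γ s)) (γ' / γ x).im x := by
  have hre : HasDerivAt (fun s => (γ s).re) γ'.re x :=
    reCLM.hasFDerivAt.comp_hasDerivAt x hγ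
  have him : HasDerivAt (fun s => (γ s).im) γ'.im x :=
    imCLM.hasFDerivAt.comp_hasDerivAt x hγ
  refine ((Real.hasDerivAt_arctan _).comp x (him.div hre hx)).congr_deriv ?_
  rw [div_im, normSq_apply, Pi.div_apply]
  field_simp

theorem ContDiffOn.intervalIntegrable_deriv_div (hcd : c < d) (hγ : ContDiffOn ℝ 1 γ (Icc c d))
    (h0 : ∀ x ∈ Icc c d, γ x ≠ 0) :
    IntervalIntegrable (fun x => deriv γ x / γ x) volume c d := by
  have hcont : ContinuousOn (fun x => derivWithin γ (Icc c d) x / γ x) (uIcc c d) := by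
    rw [uIcc_of_le hcd.le]
    exact (hγ.continuousOn_derivWithin (uniqueDiffOn_Icc hcd) le_rfl).div hγ.continuousOn h0
  refine hcont.intervalIntegrable.congr_ae ?_
  rw [uIoc_of_le hcd.le, Measure.restrict_congr_set Ioo_ae_eq_Ioc.symm]
  filter_upwards [ae_restrict_mem measurableSet_Ioo] with x hx
  rw [derivWithin_of_mem_nhds (Icc_mem_nhds hx.1 hx.2)]

theorem ContDiffOn.integral_im_deriv_div (hcd : c < d) (hγ : ContDiffOn ℝ 1 γ (Icc c d))
    (hre : ∀ x ∈ Icc c d, (γ x).re ≠ 0) :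
    ∫ x in c..d, (deriv γ x / γ x).im = arctanSlope (γ d) - arctanSlope (γ c) := by
  have hint := hγ.intervalIntegrable_deriv_div hcd fun x hx h0 => hre x hx (by simp [h0])
  have hcont : ContinuousOn (fun x => arctanSlope (γ x)) (Icc c d) :=
    Real.continuous_arctan.comp_continuousOn
      ((continuous_im.comp_continuousOn hγ.continuousOn).div
        (continuous_re.comp_continuousOn hγ.continuousOn) hre)
  refine integral_eq_sub_of_hasDerivAt_of_le hcd.le hcont (fun x hx => ?_)
    ⟨hint.1.im, hint.2.im⟩
  have hdiff := (hγ.contDiffAt (Icc_mem_nhds hx.1 hx.2)).differentiableAt one_ne_zero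
  exact hdiff.hasDerivAt.arctanSlope (hre x (Ioo_subset_Icc_self hx))

end ArctanSlope

theorem indexAlong_eq_integral_im_div {γ : ℝ → ℂ} {a b : ℝ}
    (hint : IntervalIntegrable (fun t => deriv γ t / γ t) volume a b) :
    indexAlong γ a b = (∫ t in a..b, (deriv γ t / γ t).im) / (2 * Real.pi) := by
  have him : ∫ t in a..b, (deriv γ t / γ t).im = (∫ t in a..b, deriv γ t / γ t).im :=
    intervalIntegral_im hint
  rw [indexAlong, him, one_div, mul_inv, mul_inv, inv_I, mul_re]
  simp [div_eq_mul_inv]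
  ring

theorem indexAlong_lt_half_general (γ : ℝ → ℂ) (a b : ℝ)
    (hγ : PiecewiseC1On γ a b)
    (him : ∀ t ∈ Set.Icc a b, (γ t).re ≠ 0) :
    indexAlong γ a b < 1 / 2 := by
  obtain ⟨-, n, t, rfl, rfl, ht, hC1⟩ := hγ
  have hre (i : Fin n) : ∀ x ∈ Icc (t i.castSucc) (t i.succ), (γ x).re ≠ 0 := fun x hx =>
    him x (Icc_subset_Icc (ht.monotone (Fin.zero_le _)) (ht.monotone (Fin.le_last _)) hx)
  have hlt (i : Fin n) : t i.castSucc < t i.succ := ht Fin.castSucc_lt_succ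
  have hint (i : Fin n) := (hC1 i).intervalIntegrable_deriv_div (hlt i) fun x hx h0 =>
    hre i x hx (by simp [h0])
  rw [indexAlong_eq_integral_im_div (IntervalIntegrable.of_pieces hint),
    integral_eq_sub_of_pieces (f := fun x => (deriv γ x / γ x).im)
      (F := fun x => arctanSlope (γ x))
      (fun i => ⟨(hint i).1.im, (hint i).2.im⟩)
      (fun i => (hC1 i).integral_im_deriv_div (hlt i) (hre i)),
    div_lt_iff₀ Real.two_pi_pos]
  linarith [arctanSlope_sub_arctanSlope_lt_pi (γ (t (Fin.last n))) (γ (t 0))]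

/-- A piecewise `C¹` curve with image in `{Re z ≠ 0}` has index less than `1/2`. -/
theorem indexAlong_lt_half (γ : ℝ → ℂ) (a b : ℝ) (hab : a ≤ b)
    (hγ : PiecewiseC1On γ a b)
    (him : ∀ t ∈ Set.Icc a b, (γ t).re ≠ 0) :
    indexAlong γ a b < 1 / 2 :=
  indexAlong_lt_half_general γ a b hγ him
end
end

section
/- If γ : [a,b] → ℂ is a piecewise C¹ curve whose image is contained in ℂ ∖ ({0} ∪ {iy : y > 0}), then Ind(γ) < 1. -/
open Complex Filter Set Topology

noncomputable section

/-! Multiplying by `i` turns the excluded ray `{iy : y > 0}` into the negative real axis, so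
`t ↦ log (i γ(t))` (principal branch) is a continuous primitive of `γ'/γ` along `γ`. Hence
`Ind(γ) = (arg (i γ(b)) - arg (i γ(a))) / 2π`, a difference of two arguments in `(-π, π)`. -/

open MeasureTheory intervalIntegral

section FinPartition

variable {E : Type*} [NormedAddCommGroup E] {μ : Measure ℝ}
  {f F : ℝ → E} {n : ℕ} {t : Fin (n + 1) → ℝ}

theorem IntervalIntegrable.trans_iterate_fin
    (hf : ∀ i : Fin n, IntervalIntegrable f μ (t i.castSucc) (t i.succ)) (i : Fin (n + 1)) :
    IntervalIntegrable f μ (t 0) (t i) := by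
  induction i using Fin.induction with
  | zero => rfl
  | succ i ih => exact ih.trans (hf i)

theorem intervalIntegral.integral_eq_sub_of_fin_partition [NormedSpace ℝ E]
    (hf : ∀ i : Fin n, IntervalIntegrable f μ (t i.castSucc) (t i.succ))
    (hF : ∀ i : Fin n, ∫ x in t i.castSucc..t i.succ, f x ∂μ = F (t i.succ) - F (t i.castSucc))
    (i : Fin (n + 1)) :
    ∫ x in t 0..t i, f x ∂μ = F (t i) - F (t 0) := by
  induction i using Fin.induction with
  | zero => simp
  | succ i ih =>
    rw [← integral_add_adjacent_intervals (IntervalIntegrable.trans_iterate_fin hf _) (hf i),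
      ih, hF i]
    abel

end FinPartition

theorem ContDiffOn.intervalIntegrable_deriv {E : Type*} [NormedAddCommGroup E] [NormedSpace ℝ E]
    {f : ℝ → E} {c d : ℝ} (hcd : c < d) (hf : ContDiffOn ℝ 1 f (Icc c d)) :
    IntervalIntegrable (deriv f) volume c d := by
  have hcont : ContinuousOn (derivWithin f (Icc c d)) (Icc c d) :=
    hf.continuousOn_derivWithin (uniqueDiffOn_Icc hcd) le_rfl
  rw [intervalIntegrable_iff_integrableOn_Ioo_of_le hcd.le]
  refine (hcont.integrableOn_Icc.mono_set Ioo_subset_Icc_self).congr_fun (fun x hx => ?_)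
    measurableSet_Ioo
  exact derivWithin_of_mem_nhds (Icc_mem_nhds hx.1 hx.2)

section ContourFTC

variable {γ : ℝ → ℂ} {G G' : ℂ → ℂ} {U : Set ℂ}

theorem ContDiffOn.intervalIntegrable_comp_mul_deriv {c d : ℝ} (hcd : c < d)
    (hγ : ContDiffOn ℝ 1 γ (Icc c d)) (hU : MapsTo γ (Icc c d) U) (hG' : ContinuousOn G' U) :
    IntervalIntegrable (fun t => G' (γ t) * deriv γ t) volume c d :=
  (hγ.intervalIntegrable_deriv hcd).continuousOn_mul
    (by rw [uIcc_of_le hcd.le]; exact hG'.comp hγ.continuousOn hU)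

theorem ContDiffOn.integral_comp_mul_deriv_eq_sub {c d : ℝ} (hcd : c < d)
    (hγ : ContDiffOn ℝ 1 γ (Icc c d)) (hU : MapsTo γ (Icc c d) U)
    (hG : ∀ z ∈ U, HasDerivAt G (G' z) z) (hG' : ContinuousOn G' U) :
    ∫ t in c..d, G' (γ t) * deriv γ t = G (γ d) - G (γ c) := by
  refine integral_eq_sub_of_hasDerivAt_of_le hcd.le
    (fun x hx => (hG _ (hU hx)).continuousAt.comp_continuousWithinAt (hγ.continuousOn x hx))
    (fun x hx => ?_) (hγ.intervalIntegrable_comp_mul_deriv hcd hU hG')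
  have hγx : HasDerivAt γ (deriv γ x) x :=
    ((hγ.contDiffAt (Icc_mem_nhds hx.1 hx.2)).differentiableAt one_ne_zero).hasDerivAt
  exact (hG _ (hU (Ioo_subset_Icc_self hx))).comp x hγx

theorem PiecewiseC1On.le {a b : ℝ} (hγ : PiecewiseC1On γ a b) : a ≤ b := by
  obtain ⟨-, n, t, rfl, rfl, ht, -⟩ := hγ
  exact ht.monotone (Fin.zero_le _)

theorem PiecewiseC1On.integral_comp_mul_deriv_eq_sub {a b : ℝ} (hγ : PiecewiseC1On γ a b)
    (hU : MapsTo γ (Icc a b) U) (hG : ∀ z ∈ U, HasDerivAt G (G' z) z)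
    (hG' : ContinuousOn G' U) :
    ∫ t in a..b, G' (γ t) * deriv γ t = G (γ b) - G (γ a) := by
  obtain ⟨-, n, t, rfl, rfl, ht, hpiece⟩ := hγ
  have hlt (i : Fin n) : t i.castSucc < t i.succ := ht Fin.castSucc_lt_succ
  have hUi (i : Fin n) : MapsTo γ (Icc (t i.castSucc) (t i.succ)) U :=
    hU.mono_left (Icc_subset_Icc (ht.monotone (Fin.zero_le _)) (ht.monotone (Fin.le_last _)))
  exact integral_eq_sub_of_fin_partition (F := fun s => G (γ s))
    (fun i => (hpiece i).intervalIntegrable_comp_mul_deriv (hlt i) (hUi i) hG')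
    (fun i => (hpiece i).integral_comp_mul_deriv_eq_sub (hlt i) (hUi i) hG hG') _

end ContourFTC

namespace Complex

theorem I_mul_mem_slitPlane {z : ℂ} (h₀ : z ≠ 0) (h : ¬(z.re = 0 ∧ 0 < z.im)) :
    I * z ∈ slitPlane := by
  rw [mem_slitPlane_iff, I_mul_re, I_mul_im, neg_pos]
  by_contra! hc
  exact h ⟨hc.2, hc.1.lt_of_ne fun him => h₀ (ext hc.2 him.symm)⟩

theorem hasDerivAt_log_I_mul {z : ℂ} (hz : I * z ∈ slitPlane) :
    HasDerivAt (fun w => log (I * w)) z⁻¹ z := by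
  simpa [div_mul_cancel_left₀ I_ne_zero] using ((hasDerivAt_id z).const_mul I).clog hz

theorem re_one_div_two_pi_I_mul (w : ℂ) :
    (1 / (2 * Real.pi * I) * w).re = w.im / (2 * Real.pi) := by
  simp [div_eq_mul_inv, mul_comm]

end Complex

theorem indexAlong_lt_one_general (γ : ℝ → ℂ) (a b : ℝ)
    (hγ : PiecewiseC1On γ a b)
    (him : ∀ t ∈ Set.Icc a b, γ t ≠ 0 ∧ ¬((γ t).re = 0 ∧ 0 < (γ t).im)) :
    indexAlong γ a b < 1 := by
  have hU : MapsTo γ (Icc a b) {z | I * z ∈ slitPlane} :=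
    fun t ht => I_mul_mem_slitPlane (him t ht).1 (him t ht).2
  have hFTC : ∫ t in a..b, deriv γ t / γ t = log (I * γ b) - log (I * γ a) := by
    simpa only [inv_mul_eq_div] using hγ.integral_comp_mul_deriv_eq_sub hU
      (fun _ => hasDerivAt_log_I_mul)
      (continuousOn_inv₀.mono fun _ hz => right_ne_zero_of_mul (slitPlane_ne_zero hz))
  have hb : (I * γ b).arg < Real.pi :=
    (arg_le_pi _).lt_of_ne (slitPlane_arg_ne_pi (hU ⟨hγ.le, le_rfl⟩))
  rw [indexAlong, hFTC, re_one_div_two_pi_I_mul, div_lt_one (by positivity), sub_im, log_im,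
    log_im]
  linarith [neg_pi_lt_arg (I * γ a)]

/-- A piecewise `C¹` curve with image in `ℂ ∖ ({0} ∪ {iy : y > 0})` has index less than `1`. -/
theorem indexAlong_lt_one (γ : ℝ → ℂ) (a b : ℝ) (hab : a ≤ b)
    (hγ : PiecewiseC1On γ a b)
    (him : ∀ t ∈ Set.Icc a b, γ t ≠ 0 ∧ ¬((γ t).re = 0 ∧ 0 < (γ t).im)) :
    indexAlong γ a b < 1 :=
  indexAlong_lt_one_general γ a b hγ him
end
end

section
/- For integers m ∈ ℤ and n ≥ 1, let α_{m,n} := (1 − n³ − i m³)/(1 + n³ + i m³) ∈ ℂ. Then the family (1 − |α_{m,n}|)_{(m,n) ∈ ℤ × {n ≥ 1}} is summable: Σ_{n=1}^∞ Σ_{m∈ℤ} (1 − |α_{m,n}|) < +∞. -/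
open Complex

noncomputable section

/-- The point `α_{m,n} = (1 − n³ − i m³)/(1 + n³ + i m³)` of the unit disc. -/
def alphaMN (m : ℤ) (n : ℕ) : ℂ :=
  ((1 : ℂ) - (n : ℂ) ^ 3 - Complex.I * (m : ℂ) ^ 3) /
    ((1 : ℂ) + (n : ℂ) ^ 3 + Complex.I * (m : ℂ) ^ 3)

/-! `α_{m,n} = (1 - z)/(1 + z)` with `z = n³ + i m³` in the right half-plane, and
`1 - |α| ≤ 1 - |α|² = 4 Re z / |1 + z|²`. Weighted AM–GM bounds this by
`8 (1 + |Im z|)^{-1/2} (1 + Re z)^{-1/2}`, a product of weights of size `|m|^{-3/2}` and `n^{-3/2}`,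
both summable. -/

lemma four_mul_div_sq_add_sq_le {x y : ℝ} (hx : 0 ≤ x) :
    4 * x / ((1 + x) ^ 2 + y ^ 2) ≤ 8 * ((√(1 + |y|))⁻¹ * (√(1 + x))⁻¹) := by
  set p := √(1 + x)
  set q := √(1 + |y|)
  have hp : p ^ 2 = 1 + x := Real.sq_sqrt (by positivity)
  have hq : q ^ 2 = 1 + |y| := Real.sq_sqrt (by positivity)
  have hp1 : 1 ≤ p := Real.one_le_sqrt.mpr (by linarith)
  have hq1 : 1 ≤ q := Real.one_le_sqrt.mpr (by linarith [abs_nonneg y])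
  have hy : y ^ 2 = (q ^ 2 - 1) ^ 2 := by rw [hq, add_sub_cancel_left, sq_abs]
  rw [← mul_inv, ← div_eq_mul_inv, div_le_div_iff₀ (by positivity) (by positivity), hy,
    ← hp]
  -- AM–GM `4 p³ q ≤ 3 p⁴ + q⁴`, together with `q⁴ ≤ 2 + 2 (q² - 1)²` and `1 ≤ p⁴`
  nlinarith [mul_nonneg (sq_nonneg (p - q)) (by positivity : 0 ≤ 3 * p ^ 2 + 2 * p * q + q ^ 2),
    sq_nonneg (q ^ 2 - 2), pow_le_pow_left₀ zero_le_one hp1 4]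

namespace Complex

lemma norm_one_add_sq_sub_norm_one_sub_sq (z : ℂ) :
    ‖1 + z‖ ^ 2 - ‖1 - z‖ ^ 2 = 4 * z.re := by
  simp only [Complex.sq_norm, normSq_apply, add_re, add_im, sub_re, sub_im, one_re, one_im]
  ring

lemma norm_one_add_pos_of_re_nonneg {z : ℂ} (hz : 0 ≤ z.re) : 0 < ‖1 + z‖ :=
  (by simp only [add_re, one_re]; linarith : 0 < (1 + z).re).trans_le (re_le_norm _)

lemma norm_one_sub_le_norm_one_add {z : ℂ} (hz : 0 ≤ z.re) : ‖1 - z‖ ≤ ‖1 + z‖ :=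
  (pow_le_pow_iff_left₀ (norm_nonneg _) (norm_nonneg _) two_ne_zero).mp <| by
    linarith [norm_one_add_sq_sub_norm_one_sub_sq z]

lemma norm_one_sub_div_one_add_le_one {z : ℂ} (hz : 0 ≤ z.re) :
    ‖(1 - z) / (1 + z)‖ ≤ 1 := by
  rw [norm_div, div_le_one (norm_one_add_pos_of_re_nonneg hz)]
  exact norm_one_sub_le_norm_one_add hz

lemma one_sub_norm_one_sub_div_one_add_le {z : ℂ} (hz : 0 ≤ z.re) :
    1 - ‖(1 - z) / (1 + z)‖ ≤ 4 * z.re / ‖1 + z‖ ^ 2 := by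
  have hB := norm_one_add_pos_of_re_nonneg hz
  have hAB := norm_one_sub_le_norm_one_add hz
  rw [← norm_one_add_sq_sub_norm_one_sub_sq, norm_div, le_div_iff₀ (by positivity)]
  have hmul : (1 - ‖1 - z‖ / ‖1 + z‖) * ‖1 + z‖ = ‖1 + z‖ - ‖1 - z‖ := by field_simp
  nlinarith [norm_nonneg (1 - z)]

lemma one_sub_norm_one_sub_div_one_add_le_mul {z : ℂ} (hz : 0 ≤ z.re) :
    1 - ‖(1 - z) / (1 + z)‖ ≤ 8 * ((√(1 + |z.im|))⁻¹ * (√(1 + z.re))⁻¹) := by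
  have hnorm : ‖1 + z‖ ^ 2 = (1 + z.re) ^ 2 + z.im ^ 2 := by
    simp only [Complex.sq_norm, normSq_apply, add_re, add_im, one_re, one_im, zero_add]
    ring
  calc 1 - ‖(1 - z) / (1 + z)‖ ≤ 4 * z.re / ‖1 + z‖ ^ 2 :=
        one_sub_norm_one_sub_div_one_add_le hz
    _ ≤ _ := hnorm ▸ four_mul_div_sq_add_sq_le hz

end Complex

lemma summable_inv_sqrt_one_add_abs_int_cube :
    Summable fun m : ℤ => (√(1 + |(m : ℝ) ^ 3|))⁻¹ := by
  refine .of_norm_bounded_eventually (Real.summable_abs_int_rpow (b := 3 / 2) (by norm_num)) ?_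
  filter_upwards [(Set.finite_singleton (0 : ℤ)).compl_mem_cofinite] with m hm0
  have hm : 0 < |(m : ℝ)| := by simpa using hm0
  rw [norm_inv, Real.norm_of_nonneg (Real.sqrt_nonneg _), Real.rpow_neg hm.le, abs_pow]
  gcongr
  calc |(m : ℝ)| ^ (3 / 2 : ℝ) = √(|(m : ℝ)| ^ 3) := by
        rw [Real.sqrt_eq_rpow, ← Real.rpow_natCast_mul hm.le]
        norm_num
    _ ≤ √(1 + |(m : ℝ)| ^ 3) := Real.sqrt_le_sqrt (by linarith)

lemma alphaMN_eq (m : ℤ) (n : ℕ) :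
    alphaMN m n =
      (1 - ⟨(n : ℝ) ^ 3, (m : ℝ) ^ 3⟩) / (1 + ⟨(n : ℝ) ^ 3, (m : ℝ) ^ 3⟩) := by
  unfold alphaMN
  congr 1 <;> apply Complex.ext <;> simp [← ofReal_natCast, ← ofReal_intCast, ← ofReal_pow]

/-- The family `(1 − |α_{m,n}|)_{m ∈ ℤ, n ≥ 1}` is summable (the Blaschke condition). -/
theorem alphaMN_blaschke_summable :
    Summable (fun p : ℤ × {n : ℕ // 1 ≤ n} => 1 - ‖alphaMN p.1 p.2‖) := by
  have hm := summable_inv_sqrt_one_add_abs_int_cube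
  have hn : Summable fun n : {n : ℕ // 1 ≤ n} => (√(1 + ((n : ℕ) : ℝ) ^ 3))⁻¹ := by
    simpa only [Function.comp_def, Int.cast_natCast, abs_pow, Nat.abs_cast] using
      hm.comp_injective (Nat.cast_injective.comp Subtype.val_injective)
  have hsum := (hm.mul_of_nonneg hn (fun _ => inv_nonneg.mpr (Real.sqrt_nonneg _))
    (fun _ => inv_nonneg.mpr (Real.sqrt_nonneg _))).mul_left 8
  refine hsum.of_nonneg_of_le (fun p => ?_) (fun p => ?_)
  · rw [alphaMN_eq, sub_nonneg]
    exact norm_one_sub_div_one_add_le_one (by dsimp; positivity)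
  · rw [alphaMN_eq]
    exact one_sub_norm_one_sub_div_one_add_le_mul (by dsimp; positivity)
end
end

section
/- (Lakner) Suppose f is holomorphic on Δ⁺ and extends continuously to Δ⁺ ∪ (−1,1), the extension maps (−1,1) into the cone Γ_C := {z ∈ ℂ : |Im z| ≤ C·|Re z|} for some C > 0, and the restriction of f to (−1,1) has an isolated zero at the origin (f(0) = 0 and f(x) ≠ 0 for all x in some punctured neighbourhood of 0 in (−1,1)). Then f vanishes to only finite order at 0: there exists N ∈ ℕ such that f(z)/|z|^N does not tend to 0 as z → 0 in Δ⁺. -/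
open Complex Filter Set Topology

noncomputable section

open MeasureTheory in
private lemma sign_const_aux {u : ℝ → ℝ} {I : Set ℝ} (hI : IsPreconnected I)
    (hc : ContinuousOn u I) (h0 : ∀ x ∈ I, u x ≠ 0) :
    (∀ x ∈ I, 0 < u x) ∨ (∀ x ∈ I, u x < 0) := by
  by_contra h
  push_neg at h
  obtain ⟨⟨x, hx, hx0⟩, ⟨y, hy, hy0⟩⟩ := h
  have hxneg : u x < 0 := lt_of_le_of_ne hx0 (h0 x hx)
  have hypos : 0 < u y := lt_of_le_of_ne hy0 (Ne.symm (h0 y hy))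
  obtain ⟨z, hz, hz0⟩ : (0:ℝ) ∈ u '' I := hI.intermediate_value hx hy hc ⟨hxneg.le, hypos.le⟩
  exact h0 z hz hz0

open MeasureTheory

/-- Lakner's theorem: if `f` is holomorphic on `Δ⁺`, continuous up to `(-1,1)`, maps `(-1,1)`
into the cone `Γ_C`, and `f|_{(-1,1)}` has an isolated zero at the origin, then `f` vanishes
to only finite order at `0`. -/
theorem lakner_finite_order (f : ℂ → ℂ) (C : ℝ) (hC : 0 < C)
    (hf_hol : DifferentiableOn ℂ f upperHalfDisk)
    (hf_cont : ContinuousOn f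
      (upperHalfDisk ∪ {z : ℂ | z.im = 0 ∧ -1 < z.re ∧ z.re < 1}))
    (hf_bd : ∀ x ∈ Set.Ioo (-1 : ℝ) 1, |(f x).im| ≤ C * |(f x).re|)
    (hf0 : f 0 = 0)
    (hf_iso : ∃ ε > 0, ∀ x ∈ Set.Ioo (-1 : ℝ) 1, x ≠ 0 → |x| < ε → f x ≠ 0) :
    ∃ N : ℕ, ¬ Tendsto (fun z => f z / (‖z‖ : ℂ) ^ N)
      (𝓝[upperHalfDisk] 0) (𝓝 0) := by
  by_contra hcon
  push_neg at hcon
  obtain ⟨ε, hε, hiso⟩ := hf_iso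
  set S := upperHalfDisk ∪ {z : ℂ | z.im = 0 ∧ -1 < z.re ∧ z.re < 1} with hS_def
  set a := min (ε/2) (1/3) with ha_def
  have ha0 : 0 < a := lt_min (by linarith) (by norm_num)
  have haε : a < ε := lt_of_le_of_lt (min_le_left _ _) (by linarith)
  have ha3 : a ≤ 1/3 := min_le_right _ _
  -- membership helpers
  have hre : ∀ (x y : ℝ), ((x:ℂ) + (y:ℂ) * I).re = x := by intro x y; simp
  have him : ∀ (x y : ℝ), ((x:ℂ) + (y:ℂ) * I).im = y := by intro x y; simp
  have hne0 : ∀ z : ℂ, 0 < z.im → z ≠ 0 := by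
    intro z hz h; rw [h] at hz; simp at hz
  have hmemU : ∀ z : ℂ, |z.re| ≤ a → 0 < z.im → z.im ≤ a → z ∈ upperHalfDisk := by
    intro z h1 h2 h3
    refine ⟨?_, h2⟩
    have : |z.im| ≤ a := by rw [abs_of_pos h2]; exact h3
    calc ‖z‖ ≤ |z.re| + |z.im| := Complex.norm_le_abs_re_add_abs_im z
    _ ≤ a + a := add_le_add h1 this
    _ < 1 := by linarith
  have hmemS_real : ∀ x : ℝ, |x| ≤ a → (x:ℂ) ∈ S := by
    intro x hx
    have hx' := abs_le.1 hx
    right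
    refine ⟨Complex.ofReal_im x, ?_, ?_⟩ <;> rw [Complex.ofReal_re] <;> nlinarith [hx'.1, hx'.2]
  -- bound M on the closed square
  obtain ⟨M, hM0, hM⟩ : ∃ M : ℝ, 0 ≤ M ∧
      ∀ z : ℂ, |z.re| ≤ a → 0 ≤ z.im → z.im ≤ a → ‖f z‖ ≤ M := by
    have hKc : IsCompact ((fun p : ℝ × ℝ => (p.1 : ℂ) + (p.2 : ℂ) * I) ''
        (Icc (-a) a ×ˢ Icc 0 a)) :=
      (isCompact_Icc.prod isCompact_Icc).image (by fun_prop)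
    have hKS : ((fun p : ℝ × ℝ => (p.1 : ℂ) + (p.2 : ℂ) * I) ''
        (Icc (-a) a ×ˢ Icc 0 a)) ⊆ S := by
      rintro z ⟨⟨x, y⟩, ⟨hx, hy⟩, rfl⟩
      dsimp only
      rcases eq_or_lt_of_le hy.1 with h0 | h0
      · have hy0 : y = 0 := h0.symm
        rw [hy0]
        simpa using hmemS_real x (abs_le.2 hx)
      · exact Or.inl (hmemU _ (by rw [hre]; exact abs_le.2 hx) (by rw [him]; exact h0)
          (by rw [him]; exact hy.2))
    obtain ⟨M, hM⟩ := hKc.exists_bound_of_continuousOn (hf_cont.mono hKS)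
    refine ⟨max M 0, le_max_right _ _, ?_⟩
    intro z h1 h2 h3
    have hzK : z ∈ (fun p : ℝ × ℝ => (p.1 : ℂ) + (p.2 : ℂ) * I) ''
        (Icc (-a) a ×ˢ Icc 0 a) := by
      refine ⟨⟨z.re, z.im⟩, ⟨abs_le.1 h1, h2, h3⟩, ?_⟩
      simp [Complex.re_add_im]
    exact le_trans (hM z hzK) (le_max_left _ _)
  -- u and its signs
  set u : ℝ → ℝ := fun x => (f x).re with hu_def
  have hfu_cont : ContinuousOn (fun x : ℝ => f x) (Icc (-a) a) :=
    hf_cont.comp Complex.continuous_ofReal.continuousOn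
      (fun x hx => hmemS_real x (abs_le.2 ⟨hx.1, hx.2⟩))
  have hu_cont : ContinuousOn u (Icc (-a) a) :=
    Complex.continuous_re.comp_continuousOn hfu_cont
  have hune : ∀ x : ℝ, x ≠ 0 → |x| ≤ a → u x ≠ 0 := by
    intro x hx0 hxa h
    have hx' := abs_le.1 hxa
    have hx1 : x ∈ Ioo (-1:ℝ) 1 := by constructor <;> nlinarith
    have hfx : f x ≠ 0 := hiso x hx1 hx0 (lt_of_le_of_lt hxa haε)
    have hbd := hf_bd x hx1
    simp only [hu_def] at h
    rw [h] at hbd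
    simp only [abs_zero, mul_zero, abs_nonpos_iff] at hbd
    exact hfx (Complex.ext h hbd)
  have hsgnR : ∃ σ : ℝ, (σ = 1 ∨ σ = -1) ∧ ∀ x ∈ Ioc 0 a, 0 < σ * u x := by
    rcases sign_const_aux isPreconnected_Ioc
        (hu_cont.mono (fun x hx => ⟨by linarith [hx.1], hx.2⟩))
        (fun x hx => hune x (ne_of_gt hx.1) (by rw [abs_of_pos hx.1]; exact hx.2)) with h | h
    · exact ⟨1, Or.inl rfl, fun x hx => by simpa using h x hx⟩
    · exact ⟨-1, Or.inr rfl, fun x hx => by simpa using h x hx⟩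
  have hsgnL : ∃ τ : ℝ, (τ = 1 ∨ τ = -1) ∧ ∀ x ∈ Ico (-a) 0, 0 < τ * u x := by
    rcases sign_const_aux isPreconnected_Ico
        (hu_cont.mono (fun x hx => ⟨hx.1, by linarith [hx.2]⟩))
        (fun x hx => hune x (ne_of_lt hx.2) (by rw [abs_of_neg hx.2]; linarith [hx.1])) with h | h
    · exact ⟨1, Or.inl rfl, fun x hx => by simpa using h x hx⟩
    · exact ⟨-1, Or.inr rfl, fun x hx => by simpa using h x hx⟩
  obtain ⟨σ, hσ1, hσu⟩ := hsgnR
  obtain ⟨τ, hτ1, hτu⟩ := hsgnL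
  -- the positive lower bound c on [a/3, a/2]
  obtain ⟨c, hc0, hcl⟩ : ∃ c : ℝ, 0 < c ∧ ∀ x ∈ Icc (a/3) (a/2), c ≤ σ * u x := by
    have hsub : Icc (a/3) (a/2) ⊆ Ioc 0 a := fun x hx =>
      ⟨lt_of_lt_of_le (by linarith) hx.1, le_trans hx.2 (by linarith)⟩
    have hsub2 : Icc (a/3) (a/2) ⊆ Icc (-a) a := fun x hx =>
      ⟨by linarith [hx.1], le_trans hx.2 (by linarith)⟩
    have hcont : ContinuousOn (fun x => σ * u x) (Icc (a/3) (a/2)) :=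
      continuousOn_const.mul (hu_cont.mono hsub2)
    obtain ⟨x₀, hx₀, hmin⟩ := isCompact_Icc.exists_isMinOn ⟨a/3, by constructor <;> linarith⟩ hcont
    exact ⟨σ * u x₀, hσu x₀ (hsub hx₀), fun x hx => hmin hx⟩
  -- main inequality for each m of the right parity
  have hσσ : σ * σ = 1 := by rcases hσ1 with rfl | rfl <;> norm_num
  have hane : ∀ᵐ x : ℝ ∂(volume : Measure ℝ), x ≠ 0 := by
    rw [MeasureTheory.ae_iff]
    simp only [ne_eq, not_not]
    simpa using measure_singleton (0:ℝ)
  have key : ∀ m : ℕ, 1 ≤ m → ((-1:ℝ))^m = σ * τ → c * (a/6) * 2^m ≤ 4 * a * M := by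
    intro m hm1 hpar
    set l := 𝓝[>] (0:ℝ) with hl_def
    have hIoo : Ioo (0:ℝ) a ∈ l := Ioo_mem_nhdsGT ha0
    -- flatness radius r
    obtain ⟨r, hr0, hra, hflat⟩ : ∃ r : ℝ, 0 < r ∧ r ≤ a/2 ∧
        ∀ z ∈ upperHalfDisk, ‖z‖ < r → ‖f z‖ ≤ ‖z‖^(m+1) := by
      obtain ⟨δ₀, hδ₀pos, hδ₀⟩ := (Metric.tendsto_nhdsWithin_nhds.1 (hcon (m+1))) 1 one_pos
      refine ⟨min (δ₀/2) (a/2), lt_min (by linarith) (by linarith), min_le_right _ _, ?_⟩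
      intro z hz habs
      have hz0 : z ≠ 0 := hne0 z hz.2
      have habspos : 0 < ‖z‖ := norm_pos_iff.mpr hz0
      have hd : dist z 0 < δ₀ := by
        rw [dist_zero_right]
        exact lt_of_lt_of_le habs (le_trans (min_le_left _ _) (by linarith))
      have h2 := hδ₀ hz hd
      rw [dist_zero_right, norm_div, norm_pow, Complex.norm_real, Real.norm_eq_abs,
        abs_of_pos habspos, div_lt_one (pow_pos habspos _)] at h2
      exact h2.le
    set g : ℂ → ℂ := fun z => f z / z^m with hg_def
    set F : ℝ → ℂ := fun x => f x / (x:ℂ)^m with hF_def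
    set B : ℝ := max (2*a) (M / r^m) with hB_def
    have hgnorm : ∀ z : ℂ, ‖g z‖ = ‖f z‖ / ‖z‖^m := by
      intro z
      rw [hg_def]
      simp only
      rw [norm_div, norm_pow]
    have hgbound : ∀ z : ℂ, |z.re| ≤ a → 0 < z.im → z.im ≤ a → ‖g z‖ ≤ B := by
      intro z h1 h2 h3
      have hz0 : z ≠ 0 := hne0 z h2
      have habspos : 0 < ‖z‖ := norm_pos_iff.mpr hz0
      rw [hgnorm z]
      rcases lt_or_ge ‖z‖ r with hlt | hge
      · have hfl := hflat z (hmemU z h1 h2 h3) hlt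
        refine le_trans ?_ (le_max_left (2*a) (M / r^m))
        calc ‖f z‖ / ‖z‖^m ≤ ‖z‖^(m+1) / ‖z‖^m :=
              (div_le_div_iff_of_pos_right (pow_pos habspos m)).2 hfl
        _ = ‖z‖ := by rw [pow_succ]; field_simp
        _ ≤ |z.re| + |z.im| := Complex.norm_le_abs_re_add_abs_im z
        _ ≤ 2*a := by rw [abs_of_pos h2]; linarith
      · refine le_trans ?_ (le_max_right (2*a) (M / r^m))
        exact div_le_div₀ hM0 (hM z h1 h2.le h3) (pow_pos hr0 m) (pow_le_pow_left₀ hr0.le hge m)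
    have hgbound2 : ∀ z : ℂ, |z.re| ≤ a → 0 ≤ z.im → z.im ≤ a → a ≤ ‖z‖ →
        ‖g z‖ ≤ M / a^m := by
      intro z h1 h2 h3 h4
      rw [hgnorm z]
      exact div_le_div₀ hM0 (hM z h1 h2 h3) (pow_pos ha0 m) (pow_le_pow_left₀ ha0.le h4 m)
    -- approach from above: continuity within S along vertical segments
    have hT : ∀ x : ℝ, |x| ≤ a →
        Tendsto (fun δ : ℝ => ((x:ℂ) + (δ:ℂ)*I)) l (𝓝 (x:ℂ)) ∧
        Tendsto (fun δ : ℝ => f ((x:ℂ) + (δ:ℂ)*I)) l (𝓝 (f x)) := by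
      intro x hxa
      have hmc : Continuous (fun δ : ℝ => ((x:ℂ) + (δ:ℂ)*I)) := by fun_prop
      have t1 : Tendsto (fun δ : ℝ => ((x:ℂ) + (δ:ℂ)*I)) l (𝓝 (x:ℂ)) :=
        (hmc.tendsto' 0 _ (by simp)).mono_left nhdsWithin_le_nhds
      refine ⟨t1, ?_⟩
      refine (hf_cont _ (hmemS_real x hxa)).tendsto.comp ?_
      rw [tendsto_nhdsWithin_iff]
      refine ⟨t1, ?_⟩
      filter_upwards [hIoo] with δ hδ
      exact Or.inl (hmemU _ (by rw [hre]; exact hxa) (by rw [him]; exact hδ.1)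
        (by rw [him]; exact hδ.2.le))
    have hFbound : ∀ x : ℝ, |x| ≤ a → ‖F x‖ ≤ B := by
      intro x hxa
      have hB0 : (0:ℝ) ≤ B := le_trans (by linarith) (le_max_left (2*a) (M / r^m))
      rcases eq_or_ne x 0 with rfl | hx0
      · rw [hF_def]
        simp [hf0, hB0]
      · have hxpos : 0 < |x| := abs_pos.2 hx0
        have hFx : ‖F x‖ = ‖f x‖ / |x|^m := by
          rw [hF_def]
          simp only
          rw [norm_div, norm_pow, Complex.norm_real, Real.norm_eq_abs]
        rw [hFx]
        rcases lt_or_ge (|x|) r with hlt | hge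
        · have hfx_le : ‖f x‖ ≤ |x|^(m+1) := by
            obtain ⟨t1, t2⟩ := hT x hxa
            have t3 := t2.norm
            have t4 : Tendsto (fun δ : ℝ => ‖(x:ℂ) + (δ:ℂ)*I‖^(m+1)) l
                (𝓝 (|x|^(m+1))) := by
              have h5 : Tendsto (fun δ : ℝ => ‖(x:ℂ) + (δ:ℂ)*I‖) l
                  (𝓝 ‖(x:ℂ)‖) := (continuous_norm.tendsto _).comp t1
              rw [Complex.norm_real, Real.norm_eq_abs] at h5
              exact h5.pow (m+1)
            refine le_of_tendsto_of_tendsto t3 t4 ?_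
            filter_upwards [hIoo, Ioo_mem_nhdsGT (show (0:ℝ) < r - |x| by linarith)]
              with δ hδ hδ2
            refine hflat _ (hmemU _ (by rw [hre]; exact hxa) (by rw [him]; exact hδ.1)
              (by rw [him]; exact hδ.2.le)) ?_
            calc ‖(x:ℂ) + (δ:ℂ)*I‖ ≤ |((x:ℂ) + (δ:ℂ)*I).re| + |((x:ℂ) + (δ:ℂ)*I).im| :=
                  Complex.norm_le_abs_re_add_abs_im _
            _ = |x| + δ := by rw [hre, him, abs_of_pos hδ.1]
            _ < r := by linarith [hδ2.2]
          refine le_trans ?_ (le_max_left (2*a) (M / r^m))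
          calc ‖f x‖ / |x|^m ≤ |x|^(m+1) / |x|^m :=
                (div_le_div_iff_of_pos_right (pow_pos hxpos m)).2 hfx_le
          _ = |x| := by rw [pow_succ]; field_simp
          _ ≤ 2*a := by linarith
        · refine le_trans ?_ (le_max_right (2*a) (M / r^m))
          have hfM : ‖f x‖ ≤ M := by
            apply hM (x:ℂ) (by rw [Complex.ofReal_re]; exact hxa) (le_of_eq (Complex.ofReal_im x).symm)
            rw [Complex.ofReal_im]; exact ha0.le
          exact div_le_div₀ hM0 hfM (pow_pos hr0 m) (pow_le_pow_left₀ hr0.le hge m)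
    have hUsub : upperHalfDisk ⊆ S := by rw [hS_def]; exact subset_union_left
    have hzU_ne : ∀ z ∈ upperHalfDisk, z ≠ 0 := fun z hz => hne0 z hz.2
    have hg_contU : ContinuousOn g upperHalfDisk :=
      (hf_cont.mono hUsub).div ((continuous_pow m).continuousOn)
        (fun z hz => pow_ne_zero m (hzU_ne z hz))
    have hg_diff : DifferentiableOn ℂ g upperHalfDisk :=
      hf_hol.div (differentiable_pow m).differentiableOn (fun z hz => pow_ne_zero m (hzU_ne z hz))
    -- side integrals
    have hside : ∀ cc : ℝ, |cc| = a →
        Tendsto (fun δ => ∫ y in δ..a, g ((cc:ℂ) + (y:ℂ)*I)) l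
          (𝓝 (∫ y in (0:ℝ)..a, g ((cc:ℂ) + (y:ℂ)*I))) ∧
        ‖∫ y in (0:ℝ)..a, g ((cc:ℂ) + (y:ℂ)*I)‖ ≤ (M/a^m) * a := by
      intro cc hcc
      have hcc_ne : cc ≠ 0 := by intro h; rw [h] at hcc; simp at hcc; linarith
      have hval : ∀ y ∈ Icc (0:ℝ) a, ‖g ((cc:ℂ) + (y:ℂ)*I)‖ ≤ M/a^m := by
        intro y hy
        refine hgbound2 _ (by rw [hre]; exact le_of_eq hcc) (by rw [him]; exact hy.1)
          (by rw [him]; exact hy.2) ?_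
        calc a = |cc| := hcc.symm
        _ = |((cc:ℂ) + (y:ℂ)*I).re| := by rw [hre]
        _ ≤ ‖_‖ := Complex.abs_re_le_norm _
      have hmemS : ∀ y ∈ Icc (0:ℝ) a, ((cc:ℂ) + (y:ℂ)*I) ∈ S := by
        intro y hy
        rcases eq_or_lt_of_le hy.1 with h0 | h0
        · rw [← h0]
          simpa using hmemS_real cc (le_of_eq hcc)
        · exact hUsub (hmemU _ (by rw [hre]; exact le_of_eq hcc) (by rw [him]; exact h0)
            (by rw [him]; exact hy.2))
      have hnz : ∀ y ∈ Icc (0:ℝ) a, ((cc:ℂ) + (y:ℂ)*I) ≠ 0 := by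
        intro y hy h
        have h2 : ((cc:ℂ) + (y:ℂ)*I).re = 0 := by rw [h]; simp
        rw [hre] at h2; exact hcc_ne h2
      have hmap_cont : Continuous (fun y : ℝ => ((cc:ℂ) + (y:ℂ)*I)) := by fun_prop
      have hcontSide : ContinuousOn (fun y : ℝ => g ((cc:ℂ) + (y:ℂ)*I)) (Icc 0 a) := by
        have c1 : ContinuousOn (fun y : ℝ => f ((cc:ℂ) + (y:ℂ)*I)) (Icc 0 a) :=
          hf_cont.comp hmap_cont.continuousOn hmemS
        have c2 : ContinuousOn (fun y : ℝ => ((cc:ℂ) + (y:ℂ)*I)^m) (Icc 0 a) :=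
          (hmap_cont.pow m).continuousOn
        exact c1.div c2 (fun y hy => pow_ne_zero m (hnz y hy))
      have hii : IntervalIntegrable (fun y : ℝ => g ((cc:ℂ) + (y:ℂ)*I)) volume 0 a := by
        apply ContinuousOn.intervalIntegrable
        rwa [uIcc_of_le ha0.le]
      constructor
      · have hsplit : ∀ᶠ δ in l, (∫ y in (0:ℝ)..a, g ((cc:ℂ) + (y:ℂ)*I))
            - (∫ y in (0:ℝ)..δ, g ((cc:ℂ) + (y:ℂ)*I)) = ∫ y in δ..a, g ((cc:ℂ) + (y:ℂ)*I) := by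
          filter_upwards [hIoo] with δ hδ
          have h1 : IntervalIntegrable (fun y : ℝ => g ((cc:ℂ) + (y:ℂ)*I)) volume 0 δ :=
            hii.mono_set (by rw [uIcc_of_le ha0.le, uIcc_of_le hδ.1.le]
                             exact Icc_subset_Icc le_rfl hδ.2.le)
          have h2 : IntervalIntegrable (fun y : ℝ => g ((cc:ℂ) + (y:ℂ)*I)) volume δ a :=
            hii.mono_set (by rw [uIcc_of_le ha0.le, uIcc_of_le hδ.2.le]
                             exact Icc_subset_Icc hδ.1.le le_rfl)
          rw [sub_eq_iff_eq_add]
          exact (intervalIntegral.integral_add_adjacent_intervals h1 h2).symm.trans (add_comm _ _)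
        have hsmall : Tendsto (fun δ => ∫ y in (0:ℝ)..δ, g ((cc:ℂ) + (y:ℂ)*I)) l (𝓝 0) := by
          apply squeeze_zero_norm' (a := fun δ : ℝ => (M/a^m) * δ)
          · filter_upwards [hIoo] with δ hδ
            calc ‖∫ y in (0:ℝ)..δ, g ((cc:ℂ) + (y:ℂ)*I)‖ ≤ (M/a^m) * |δ - 0| := by
                  apply intervalIntegral.norm_integral_le_of_norm_le_const
                  intro y hy
                  rw [uIoc_of_le hδ.1.le] at hy
                  exact hval y ⟨hy.1.le, le_trans hy.2 hδ.2.le⟩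
            _ = (M/a^m) * δ := by rw [sub_zero, abs_of_pos hδ.1]
          · have h6 : Tendsto (fun δ : ℝ => (M/a^m) * δ) (𝓝 0) (𝓝 0) := by
              have := (continuous_const.mul continuous_id : Continuous fun δ : ℝ => (M/a^m) * δ)
              simpa only [id, mul_zero] using (tendsto_id (x := 𝓝 (0:ℝ))).const_mul (M/a^m)
            exact h6.mono_left nhdsWithin_le_nhds
        have h7 : Tendsto (fun δ : ℝ => (∫ y in (0:ℝ)..a, g ((cc:ℂ) + (y:ℂ)*I))
            - ∫ y in (0:ℝ)..δ, g ((cc:ℂ) + (y:ℂ)*I)) l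
            (𝓝 ((∫ y in (0:ℝ)..a, g ((cc:ℂ) + (y:ℂ)*I)) - 0)) := tendsto_const_nhds.sub hsmall
        rw [sub_zero] at h7
        exact h7.congr' hsplit
      · calc ‖∫ y in (0:ℝ)..a, g ((cc:ℂ) + (y:ℂ)*I)‖ ≤ (M/a^m) * |a - 0| := by
              apply intervalIntegral.norm_integral_le_of_norm_le_const
              intro y hy
              rw [uIoc_of_le ha0.le] at hy
              exact hval y ⟨hy.1.le, hy.2⟩
        _ = (M/a^m) * a := by rw [sub_zero, abs_of_pos ha0]
    -- bottom limit (dominated convergence)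
    have hBotLim : Tendsto (fun δ : ℝ => ∫ x in (-a)..a, g ((x:ℂ) + (δ:ℂ)*I)) l
        (𝓝 (∫ x in (-a)..a, F x)) := by
      apply intervalIntegral.tendsto_integral_filter_of_dominated_convergence (fun _ => B)
      · filter_upwards [hIoo] with δ hδ
        apply ContinuousOn.aestronglyMeasurable _ measurableSet_uIoc
        have hmapb : Continuous (fun x : ℝ => ((x:ℂ) + (δ:ℂ)*I)) := by fun_prop
        apply hg_contU.comp hmapb.continuousOn
        intro x hx
        rw [uIoc_of_le (by linarith : -a ≤ a)] at hx
        exact hmemU _ (by rw [hre]; exact abs_le.2 ⟨hx.1.le, hx.2⟩) (by rw [him]; exact hδ.1)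
          (by rw [him]; exact hδ.2.le)
      · filter_upwards [hIoo] with δ hδ
        apply MeasureTheory.ae_of_all
        intro x hx
        rw [uIoc_of_le (by linarith : -a ≤ a)] at hx
        exact hgbound _ (by rw [hre]; exact abs_le.2 ⟨hx.1.le, hx.2⟩) (by rw [him]; exact hδ.1)
          (by rw [him]; exact hδ.2.le)
      · exact intervalIntegrable_const
      · filter_upwards [hane] with x hx0 hxmem
        rw [uIoc_of_le (by linarith : -a ≤ a)] at hxmem
        have hxa : |x| ≤ a := abs_le.2 ⟨hxmem.1.le, hxmem.2⟩
        obtain ⟨t1, t2⟩ := hT x hxa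
        have t3 : Tendsto (fun δ : ℝ => ((x:ℂ) + (δ:ℂ)*I)^m) l (𝓝 ((x:ℂ)^m)) := t1.pow m
        exact t2.div t3 (pow_ne_zero m (Complex.ofReal_ne_zero.2 hx0))
    -- integrability of F
    have hIocInt : IntegrableOn F (Ioc (-a) a) volume := by
      have hmeas : AEStronglyMeasurable F (volume.restrict (Ioc (-a) a)) := by
        have hcont : ContinuousOn F (Ioc (-a) a \ {0}) := by
          have c1 : ContinuousOn (fun x : ℝ => f x) (Ioc (-a) a \ {0}) :=
            hf_cont.comp Complex.continuous_ofReal.continuousOn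
              (fun x hx => hmemS_real x (abs_le.2 ⟨hx.1.1.le, hx.1.2⟩))
          have c2 : ContinuousOn (fun x : ℝ => ((x:ℂ))^m) (Ioc (-a) a \ {0}) := by fun_prop
          exact c1.div c2 (fun x hx => pow_ne_zero m (Complex.ofReal_ne_zero.2 hx.2))
        have h1 : AEStronglyMeasurable F (volume.restrict (Ioc (-a) a \ {0})) :=
          hcont.aestronglyMeasurable (measurableSet_Ioc.diff (measurableSet_singleton 0))
        rwa [Measure.restrict_congr_set
          (diff_ae_eq_self.2 (measure_mono_null inter_subset_right (measure_singleton 0)))] at h1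
      apply Integrable.mono' (integrableOn_const (C := B) measure_Ioc_lt_top.ne) hmeas
      exact (ae_restrict_iff' measurableSet_Ioc).2
        (MeasureTheory.ae_of_all _ (fun x hx => hFbound x (abs_le.2 ⟨hx.1.le, hx.2⟩)))
    have hFint : IntervalIntegrable F volume (-a) a :=
      (intervalIntegrable_iff_integrableOn_Ioc_of_le (by linarith : -a ≤ a)).2 hIocInt
    -- rectangle identity
    have hrect : ∀ δ : ℝ, δ ∈ Ioo 0 a →
        (∫ x in (-a)..a, g ((x:ℂ) + (δ:ℂ)*I)) = (∫ x in (-a)..a, g ((x:ℂ) + (a:ℂ)*I))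
          - I • (∫ y in δ..a, g ((a:ℂ) + (y:ℂ)*I)) + I • (∫ y in δ..a, g ((-a:ℝ) + (y:ℂ)*I)) := by
      intro δ hδ
      have hsub : (uIcc (-a:ℝ) a ×ℂ uIcc δ a) ⊆ upperHalfDisk := by
        intro z hz
        rw [Complex.mem_reProdIm, uIcc_of_le (by linarith : -(a:ℝ) ≤ a), uIcc_of_le hδ.2.le] at hz
        exact hmemU z (abs_le.2 ⟨hz.1.1, hz.1.2⟩) (lt_of_lt_of_le hδ.1 hz.2.1) hz.2.2
      have h0 :
          (∫ x in (-a)..a, g ((x:ℂ) + (δ:ℂ)*I)) - (∫ x in (-a)..a, g ((x:ℂ) + (a:ℂ)*I))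
            + I • (∫ y in δ..a, g ((a:ℂ) + (y:ℂ)*I))
            - I • (∫ y in δ..a, g ((-a:ℝ) + (y:ℂ)*I)) = 0 :=
        Complex.integral_boundary_rect_eq_zero_of_differentiableOn g ⟨-a, δ⟩ ⟨a, a⟩
          (hg_diff.mono hsub)
      linear_combination h0
    -- pass to the limit in the rectangle identity
    obtain ⟨hRt, hRn⟩ := hside a (abs_of_pos ha0)
    obtain ⟨hLt, hLn⟩ := hside (-a) (by rw [abs_neg, abs_of_pos ha0])
    have hRHS : Tendsto (fun δ => (∫ x in (-a)..a, g ((x:ℂ) + (a:ℂ)*I))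
          - I • (∫ y in δ..a, g ((a:ℂ) + (y:ℂ)*I)) + I • (∫ y in δ..a, g ((-a:ℝ) + (y:ℂ)*I))) l
        (𝓝 ((∫ x in (-a)..a, g ((x:ℂ) + (a:ℂ)*I))
          - I • (∫ y in (0:ℝ)..a, g ((a:ℂ) + (y:ℂ)*I))
          + I • (∫ y in (0:ℝ)..a, g ((-a:ℝ) + (y:ℂ)*I)))) :=
      (tendsto_const_nhds.sub (hRt.const_smul I)).add (hLt.const_smul I)
    have hEq : (∫ x in (-a)..a, F x) = (∫ x in (-a)..a, g ((x:ℂ) + (a:ℂ)*I))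
          - I • (∫ y in (0:ℝ)..a, g ((a:ℂ) + (y:ℂ)*I))
          + I • (∫ y in (0:ℝ)..a, g ((-a:ℝ) + (y:ℂ)*I)) :=
      tendsto_nhds_unique hBotLim
        (hRHS.congr' (eventually_of_mem hIoo (fun δ hδ => (hrect δ hδ).symm)))
    -- norm bound on the limit
    have hTopn : ‖∫ x in (-a)..a, g ((x:ℂ) + (a:ℂ)*I)‖ ≤ (M/a^m) * (2*a) := by
      have hb : ∀ x ∈ Set.uIoc (-a) a, ‖g ((x:ℂ) + (a:ℂ)*I)‖ ≤ M/a^m := by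
        intro x hx
        rw [uIoc_of_le (by linarith : -a ≤ a)] at hx
        refine hgbound2 _ (by rw [hre]; exact abs_le.2 ⟨hx.1.le, hx.2⟩)
          (by rw [him]; exact ha0.le) (le_of_eq (him x a)) ?_
        calc a = |((x:ℂ) + (a:ℂ)*I).im| := by rw [him, abs_of_pos ha0]
        _ ≤ ‖_‖ := Complex.abs_im_le_norm _
      calc ‖∫ x in (-a)..a, g ((x:ℂ) + (a:ℂ)*I)‖ ≤ (M/a^m) * |a - (-a)| :=
            intervalIntegral.norm_integral_le_of_norm_le_const hb
      _ = (M/a^m) * (2*a) := by rw [show a - (-a) = 2*a by ring, abs_of_pos (by linarith)]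
    have hB₀n : ‖∫ x in (-a)..a, F x‖ ≤ 4 * a * (M/a^m) := by
      rw [hEq]
      have e1 : ‖I • (∫ y in (0:ℝ)..a, g ((a:ℂ) + (y:ℂ)*I))‖
          = ‖∫ y in (0:ℝ)..a, g ((a:ℂ) + (y:ℂ)*I)‖ := by
        rw [norm_smul, Complex.norm_I, one_mul]
      have e2 : ‖I • (∫ y in (0:ℝ)..a, g ((-a:ℝ) + (y:ℂ)*I))‖
          = ‖∫ y in (0:ℝ)..a, g ((-a:ℝ) + (y:ℂ)*I)‖ := by
        rw [norm_smul, Complex.norm_I, one_mul]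
      calc ‖_ - _ + _‖ ≤ ‖_ - _‖ + ‖_‖ := norm_add_le _ _
      _ ≤ ‖_‖ + ‖_‖ + ‖_‖ := by exact add_le_add (norm_sub_le _ _) le_rfl
      _ ≤ (M/a^m) * (2*a) + (M/a^m)*a + (M/a^m)*a := by
          rw [e1, e2]
          exact add_le_add (add_le_add hTopn hRn) hLn
      _ = 4 * a * (M/a^m) := by ring
    -- the real-part lower bound
    have hBre : (∫ x in (-a)..a, F x).re = ∫ x in Ioc (-a) a, (F x).re := by
      rw [intervalIntegral.integral_of_le (by linarith : -a ≤ a)]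
      exact (_root_.integral_re hIocInt).symm
    have hφpt : ∀ x : ℝ, (F x).re = (x^m)⁻¹ * u x := by
      intro x
      rw [hF_def]
      simp only
      rw [show ((x:ℂ))^m = ((x^m : ℝ) : ℂ) by push_cast; ring, div_eq_mul_inv,
        ← Complex.ofReal_inv, mul_comm, Complex.re_ofReal_mul]
    have hφ_nonneg : ∀ x ∈ Ioc (-a) a, x ≠ 0 → 0 ≤ σ * (F x).re := by
      intro x hx hx0
      rw [hφpt x]
      rcases lt_or_gt_of_ne hx0 with hneg | hpos
      · have hp : 0 < (-x)^m := pow_pos (by linarith) m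
        have hxm : x^m = (σ*τ) * (-x)^m := by
          calc x^m = (-(-x))^m := by ring_nf
          _ = (-1)^m * (-x)^m := by rw [neg_pow]
          _ = (σ*τ) * (-x)^m := by rw [hpar]
        have hτux : 0 < τ * u x := hτu x ⟨hx.1.le, hneg⟩
        have hστinv : (σ*τ)⁻¹ = σ*τ := by
          rcases hσ1 with rfl|rfl <;> rcases hτ1 with rfl|rfl <;> norm_num
        have hcalc : σ * ((x^m)⁻¹ * u x) = (τ * u x) * ((-x)^m)⁻¹ := by
          rw [hxm, mul_inv, hστinv]
          linear_combination (τ * (((-x)^m)⁻¹) * u x) * hσσ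
        rw [hcalc]
        exact mul_nonneg hτux.le (inv_nonneg.2 hp.le)
      · have hσux : 0 < σ * u x := hσu x ⟨hpos, hx.2⟩
        have hp : 0 < x^m := pow_pos hpos m
        have hcalc : σ * ((x^m)⁻¹ * u x) = (σ * u x) * (x^m)⁻¹ := by ring
        rw [hcalc]
        exact mul_nonneg hσux.le (inv_nonneg.2 hp.le)
    have hφ_int : IntegrableOn (fun x => σ * (F x).re) (Ioc (-a) a) volume :=
      (hIocInt.re).const_mul σ
    have hφ_ae : 0 ≤ᵐ[volume.restrict (Ioc (-a) a)] (fun x => σ * (F x).re) := by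
      filter_upwards [MeasureTheory.ae_restrict_of_ae hane,
        MeasureTheory.ae_restrict_mem measurableSet_Ioc] with x hx0 hxmem
      exact hφ_nonneg x hxmem hx0
    have hsubI : Icc (a/3) (a/2) ⊆ Ioc (-a) a := fun x hx =>
      ⟨by linarith [hx.1], le_trans hx.2 (by linarith)⟩
    have hmono1 : (∫ x in Icc (a/3) (a/2), σ * (F x).re) ≤ ∫ x in Ioc (-a) a, σ * (F x).re :=
      setIntegral_mono_set hφ_int hφ_ae (HasSubset.Subset.eventuallyLE hsubI)
    have hconst : c / (a/2)^m * (volume (Icc (a/3) (a/2))).toReal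
        ≤ ∫ x in Icc (a/3) (a/2), σ * (F x).re := by
      rw [mul_comm (c / (a/2)^m), ← smul_eq_mul]
      apply setIntegral_ge_of_const_le measurableSet_Icc measure_Icc_lt_top.ne
      · intro x hx
        have hx3 : 0 < x := lt_of_lt_of_le (by linarith) hx.1
        have hxm : 0 < x^m := pow_pos hx3 m
        have hm2 : x^m ≤ (a/2)^m := pow_le_pow_left₀ hx3.le hx.2 m
        have hinv : ((a/2)^m)⁻¹ ≤ (x^m)⁻¹ := by
          apply inv_anti₀ hxm hm2
        rw [hφpt x]
        have heq : σ * ((x^m)⁻¹ * u x) = (σ * u x) * (x^m)⁻¹ := by ring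
        rw [heq]
        calc c / (a/2)^m = c * ((a/2)^m)⁻¹ := div_eq_mul_inv _ _
        _ ≤ (σ * u x) * (x^m)⁻¹ :=
            mul_le_mul (hcl x hx) hinv (by positivity) (le_trans hc0.le (hcl x hx))
      · exact hφ_int.mono_set hsubI
    have hvol : (volume (Icc (a/3) (a/2))).toReal = a/6 := by
      rw [Real.volume_Icc, ENNReal.toReal_ofReal (by linarith)]
      ring
    have hup : σ * (∫ x in (-a)..a, F x).re ≤ 4*a*(M/a^m) := by
      have h1 : σ * (∫ x in (-a)..a, F x).re ≤ |(∫ x in (-a)..a, F x).re| := by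
        rcases hσ1 with rfl | rfl
        · rw [one_mul]; exact le_abs_self _
        · rw [neg_one_mul]; exact neg_le_abs _
      refine le_trans h1 (le_trans (Complex.abs_re_le_norm _) ?_)
      exact hB₀n
    have hlow : c / (a/2)^m * (a/6) ≤ σ * (∫ x in (-a)..a, F x).re := by
      rw [hBre, ← MeasureTheory.integral_const_mul]
      calc c/(a/2)^m * (a/6) = c/(a/2)^m * (volume (Icc (a/3) (a/2))).toReal := by rw [hvol]
      _ ≤ ∫ x in Icc (a/3) (a/2), σ * (F x).re := hconst
      _ ≤ ∫ x in Ioc (-a) a, σ * (F x).re := hmono1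
    have hcomb : c / (a/2)^m * (a/6) ≤ 4*a*(M/a^m) := le_trans hlow hup
    have h2m : ((a:ℝ)/2)^m = a^m / 2^m := div_pow a 2 m
    have hrew : c / (a/2)^m * (a/6) = (c * (a/6) * 2^m) / a^m := by
      rw [h2m, div_div_eq_mul_div]
      ring
    have hrew2 : 4*a*(M/a^m) = (4*a*M) / a^m := by ring
    rw [hrew, hrew2] at hcomb
    have hpow : (0:ℝ) < a^m := pow_pos ha0 m
    have hfin := (div_le_div_iff₀ hpow hpow).1 hcomb
    exact le_of_mul_le_mul_right hfin hpow
  -- final contradiction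
  obtain ⟨k, hk⟩ := pow_unbounded_of_one_lt (24 * M / c) one_lt_two
  have hστ : σ * τ = 1 ∨ σ * τ = -1 := by
    rcases hσ1 with rfl | rfl <;> rcases hτ1 with rfl | rfl <;> norm_num
  have habs : ∀ m : ℕ, 1 ≤ m → ((-1:ℝ))^m = σ * τ → k ≤ m → False := by
    intro m hm1 hpar hkm
    have h1 := key m hm1 hpar
    have hmono : (2:ℝ)^k ≤ 2^m := pow_le_pow_right₀ one_le_two hkm
    have hpos : 0 < c * (a/6) := by positivity
    have h2 : c * (a/6) * (24 * M / c) < c * (a/6) * 2^m :=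
      mul_lt_mul_of_pos_left (lt_of_lt_of_le hk hmono) hpos
    have h3 : c * (a/6) * (24 * M / c) = 4 * a * M := by
      field_simp
      ring
    rw [h3] at h2
    linarith
  rcases hστ with h | h
  · exact habs (2*k+2) (by omega) (by rw [h]; exact Even.neg_one_pow ⟨k+1, by ring⟩) (by omega)
  · exact habs (2*k+1) (by omega) (by rw [h]; exact Odd.neg_one_pow ⟨k, rfl⟩) (by omega)
end
end
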